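/- arXiv:2605.05744 — 7 statements merged into one kernel-verified Lean document; each statement's English description precedes it below -/
import Mathlib

section
/- Let p be a probability mass function on ℕ = {1,2,3,...} with p(x) > 0 for all x ∈ ℕ, and let X be a random variable taking values in ℕ with probability generating function G_X(s) = E[s^X]. Then X has probability mass function p if and only if for every s ∈ (0,1): (1 - s)·G_X(s) = E[ -((p(X+1) - p(X))/p(X)) · s · (1 - s^X) ]. -/
open MeasureTheory Real Filter Set

noncomputable def zetaR (ν : ℝ) : ℝ := ∑' k : ℕ, ((k : ℝ) + 1) ^ (-ν)

noncomputable def dpPMF (ν : ℝ) (k : ℕ) : ℝ := (k : ℝ) ^ (-ν) / zetaR ν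

noncomputable def g (ν : ℝ) (x : ℕ) (s : ℝ) : ℝ :=
  s ^ (x - 1) - 1 + ((x : ℝ) / ((x : ℝ) + 1)) ^ ν * (1 - s ^ x)

noncomputable def hker (ν : ℝ) (x y : ℕ) : ℝ :=
  ∫ s in (0:ℝ)..1, g ν x s * g ν y s

def IsDPareto {Ω : Type*} [MeasurableSpace Ω] (P : Measure Ω) (X : Ω → ℕ) (ν : ℝ) : Prop :=
  ∀ k : ℕ, 1 ≤ k → P (X ⁻¹' {k}) = ENNReal.ofReal (dpPMF ν k)

open scoped ENNReal NNReal

lemma aux_integrable_iff {Ω : Type*} [MeasurableSpace Ω] (P : Measure Ω) [IsProbabilityMeasure P]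
    (X : Ω → ℕ) (hXm : Measurable X) (f : ℕ → ℝ) :
    Integrable (fun ω => f (X ω)) P ↔
      Summable (fun k => (P (X ⁻¹' {k})).toReal * |f k|) := by
  have hmap : ∀ k : ℕ, (P.map X) {k} = P (X ⁻¹' {k}) := fun k =>
    Measure.map_apply hXm (measurableSet_singleton k)
  have hfm : Measurable f := measurable_from_nat
  have hlin : ∫⁻ ω, ‖f (X ω)‖₊ ∂P = ∑' k : ℕ, (‖f k‖₊ : ℝ≥0∞) * P (X ⁻¹' {k}) := by
    rw [← lintegral_map (measurable_from_nat (f := fun k => ((‖f k‖₊ : ℝ≥0∞)))) hXm,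
      lintegral_countable']
    exact tsum_congr fun k => by rw [hmap]
  constructor
  · intro hI
    have hfin : ∑' k : ℕ, (‖f k‖₊ : ℝ≥0∞) * P (X ⁻¹' {k}) ≠ ∞ := by
      rw [← hlin]; exact hI.hasFiniteIntegral.ne
    have := ENNReal.summable_toReal hfin
    refine this.congr fun k => ?_
    simp [ENNReal.toReal_mul, Real.norm_eq_abs, mul_comm]
  · intro hS
    refine ⟨(hfm.comp hXm).aestronglyMeasurable, ?_⟩
    show (∫⁻ ω, ‖f (X ω)‖₊ ∂P) < ∞
    rw [hlin]
    have heq : ∀ k : ℕ, (‖f k‖₊ : ℝ≥0∞) * P (X ⁻¹' {k})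
        = ENNReal.ofReal ((P (X ⁻¹' {k})).toReal * |f k|) := by
      intro k
      rw [ENNReal.ofReal_mul ENNReal.toReal_nonneg,
        ENNReal.ofReal_toReal (measure_ne_top P _), ← Real.norm_eq_abs,
        ofReal_norm, enorm_eq_nnnorm, mul_comm]
    rw [tsum_congr heq, ← ENNReal.ofReal_tsum_of_nonneg
      (fun k => mul_nonneg ENNReal.toReal_nonneg (abs_nonneg _)) hS]
    exact ENNReal.ofReal_lt_top

lemma aux_integral_eq {Ω : Type*} [MeasurableSpace Ω] (P : Measure Ω) [IsProbabilityMeasure P]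
    (X : Ω → ℕ) (hXm : Measurable X) (f : ℕ → ℝ)
    (hI : Integrable (fun ω => f (X ω)) P) :
    ∫ ω, f (X ω) ∂P = ∑' k : ℕ, (P (X ⁻¹' {k})).toReal * f k := by
  have hfm : Measurable f := measurable_from_nat
  have hI' : Integrable f (P.map X) :=
    (integrable_map_measure hfm.aestronglyMeasurable hXm.aemeasurable).2 hI
  rw [← integral_map hXm.aemeasurable hfm.aestronglyMeasurable, integral_countable' hI']
  exact tsum_congr fun k => by
    rw [measureReal_def, Measure.map_apply hXm (measurableSet_singleton k), smul_eq_mul]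

set_option maxHeartbeats 1000000 in
lemma aux_coeff_zero (d : ℕ → ℝ)
    (hs : ∀ s : ℝ, s ∈ Set.Ioo (0:ℝ) 1 → Summable fun k => d k * s ^ k)
    (hz : ∀ s : ℝ, s ∈ Set.Ioo (0:ℝ) 1 → ∑' k, d k * s ^ k = 0) :
    ∀ n, d n = 0 := by
  intro n
  induction n using Nat.strong_induction_on with
  | _ n ih =>
  have hhalf : (1/2 : ℝ) ∈ Set.Ioo (0:ℝ) 1 := by norm_num
  have h2 : Summable fun k => |d k| * (1/2:ℝ) ^ k := by
    have h := (hs (1/2) hhalf).abs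
    refine h.congr fun k => ?_
    rw [abs_mul, abs_of_nonneg (by positivity : (0:ℝ) ≤ (1/2:ℝ)^k)]
  have hMsum : Summable fun k : ℕ => |d (k + 1 + n)| * (1/2:ℝ) ^ (k + 1 + n) := by
    have := (summable_nat_add_iff (f := fun k => |d k| * (1/2:ℝ) ^ k) (1 + n)).2 h2
    exact this.congr fun k => by rw [← add_assoc]
  set M : ℝ := ∑' k : ℕ, |d (k + 1 + n)| * (1/2:ℝ) ^ (k + 1 + n) with hMdef
  have hM0 : 0 ≤ M := tsum_nonneg fun k => by positivity
  have key : ∀ s : ℝ, s ∈ Set.Ioo (0:ℝ) (1/2) → |d n| ≤ 2^(n+1) * M * s := by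
    intro s hsmem
    obtain ⟨hs0, hs12⟩ := hsmem
    have hs1 : s < 1 := lt_trans hs12 (by norm_num)
    have hsum := hs s ⟨hs0, hs1⟩
    have h0 := hz s ⟨hs0, hs1⟩
    have hsplit := Summable.sum_add_tsum_nat_add (f := fun k => d k * s ^ k) n hsum
    have hfin : (∑ i ∈ Finset.range n, d i * s ^ i) = 0 :=
      Finset.sum_eq_zero fun i hi => by rw [ih i (Finset.mem_range.1 hi), zero_mul]
    have hT : ∑' i : ℕ, d (i + n) * s ^ (i + n) = 0 := by
      have := hsplit.trans h0
      rw [hfin, zero_add] at this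
      exact this
    have hsum' : Summable fun i : ℕ => d (i + n) * s ^ (i + n) :=
      (summable_nat_add_iff n).2 hsum
    have htail : d n * s ^ n = -∑' i : ℕ, d (i + 1 + n) * s ^ (i + 1 + n) := by
      have := Summable.tsum_eq_zero_add hsum'
      rw [hT] at this
      have h00 : d (0 + n) * s ^ (0 + n) = d n * s ^ n := by rw [Nat.zero_add]
      have := this.symm
      rw [h00] at this
      linarith [this]
    have habs : Summable fun i : ℕ => |d (i + 1 + n) * s ^ (i + 1 + n)| := by
      exact (((summable_nat_add_iff (1 + n)).2 hsum).congr
        (fun k => by rw [← add_assoc])).abs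
    have hb : ∀ i : ℕ, |d (i + 1 + n) * s ^ (i + 1 + n)|
        ≤ (2*s)^(n+1) * (|d (i + 1 + n)| * (1/2:ℝ) ^ (i + 1 + n)) := by
      intro i
      rw [abs_mul, abs_of_nonneg (by positivity : (0:ℝ) ≤ s ^ (i+1+n))]
      have hsp : s ^ (i + 1 + n) ≤ (2*s)^(n+1) * (1/2:ℝ) ^ (i + 1 + n) := by
        have h1 : s ^ (i+1+n) = (2*s)^(i+1+n) * (1/2:ℝ)^(i+1+n) := by
          rw [← mul_pow]; ring_nf
        rw [h1]
        have h2s : (2*s) ≤ 1 := by linarith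
        have h2s0 : (0:ℝ) ≤ 2*s := by linarith
        have hle : (2*s)^(i+1+n) ≤ (2*s)^(n+1) :=
          pow_le_pow_of_le_one h2s0 h2s (by omega)
        exact mul_le_mul_of_nonneg_right hle (by positivity)
      calc |d (i+1+n)| * s ^ (i+1+n) ≤ |d (i+1+n)| * ((2*s)^(n+1) * (1/2:ℝ)^(i+1+n)) :=
            mul_le_mul_of_nonneg_left hsp (abs_nonneg _)
        _ = (2*s)^(n+1) * (|d (i+1+n)| * (1/2:ℝ)^(i+1+n)) := by ring
    have hbound : |d n| * s ^ n ≤ (2*s)^(n+1) * M := by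
      have h1 : |d n * s ^ n| ≤ ∑' i : ℕ, |d (i + 1 + n) * s ^ (i + 1 + n)| := by
        rw [htail, abs_neg]
        have := norm_tsum_le_tsum_norm (f := fun i : ℕ => d (i + 1 + n) * s ^ (i + 1 + n))
          (by simpa only [Real.norm_eq_abs] using habs)
        simpa only [Real.norm_eq_abs] using this
      have h2' : (∑' i : ℕ, |d (i + 1 + n) * s ^ (i + 1 + n)|)
          ≤ ∑' i : ℕ, (2*s)^(n+1) * (|d (i + 1 + n)| * (1/2:ℝ) ^ (i + 1 + n)) :=
        Summable.tsum_le_tsum hb habs (hMsum.mul_left _)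
      rw [tsum_mul_left] at h2'
      have h3 : |d n * s ^ n| = |d n| * s ^ n := by
        rw [abs_mul, abs_of_nonneg (by positivity : (0:ℝ) ≤ s ^ n)]
      linarith [h1.trans h2']
    have hexp : (2*s)^(n+1) * M = (2^(n+1) * M * s) * s ^ n := by
      rw [mul_pow]; ring
    rw [hexp] at hbound
    exact le_of_mul_le_mul_right hbound (pow_pos hs0 n)
  by_contra hne
  have hdn : 0 < |d n| := abs_pos.2 hne
  set C : ℝ := 2^(n+1) * M with hCdef
  have hC0 : 0 ≤ C := by positivity
  set s0 : ℝ := min (1/4) (|d n| / (2*(C+1))) with hs0def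
  have hs0pos : 0 < s0 := lt_min (by norm_num) (by positivity)
  have hs0lt : s0 < 1/2 := lt_of_le_of_lt (min_le_left _ _) (by norm_num)
  have h1 := key s0 ⟨hs0pos, hs0lt⟩
  have h2 : s0 ≤ |d n| / (2*(C+1)) := min_le_right _ _
  have h3 : C * s0 ≤ (C+1) * (|d n| / (2*(C+1))) := by
    have := mul_le_mul (le_refl (C+1)) h2 (le_of_lt hs0pos) (by linarith)
    nlinarith
  have h4 : (C+1) * (|d n| / (2*(C+1))) = |d n| / 2 := by
    field_simp
  nlinarith

lemma aux_forward (p : ℕ → ℝ) (hpnn : ∀ k, 0 ≤ p (k+1))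
    (hpS : Summable fun k => p (k+1)) (hp1 : ∑' k : ℕ, p (k+1) = 1)
    {s : ℝ} (hs0 : 0 < s) (hs1 : s < 1) :
    (1-s) * ∑' k : ℕ, p (k+1) * s^(k+1)
      = ∑' k : ℕ, (p (k+1) - p (k+2)) * (s * (1 - s^(k+1))) := by
  have hsnn : 0 ≤ s := hs0.le
  have hpow : ∀ m : ℕ, s ^ m ≤ 1 := fun m => pow_le_one₀ hsnn hs1.le
  have hpownn : ∀ m : ℕ, (0:ℝ) ≤ s ^ m := fun m => pow_nonneg hsnn m
  have hpS2 : Summable fun k => p (k+2) := (summable_nat_add_iff 1).2 hpS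
  have SG : Summable fun k => p (k+1) * s^(k+1) :=
    Summable.of_nonneg_of_le (fun k => mul_nonneg (hpnn k) (hpownn _))
      (fun k => by nlinarith [hpow (k+1), hpnn k, hpownn (k+1)]) hpS
  have SGs : Summable fun k => p (k+1) * s^(k+2) :=
    Summable.of_nonneg_of_le (fun k => mul_nonneg (hpnn k) (hpownn _))
      (fun k => by nlinarith [hpow (k+2), hpnn k, hpownn (k+2)]) hpS
  have SG2s : Summable fun k => p (k+2) * s^(k+2) :=
    Summable.of_nonneg_of_le (fun k => mul_nonneg (hpnn (k+1)) (hpownn _))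
      (fun k => by nlinarith [hpow (k+2), hpnn (k+1), hpownn (k+2)]) hpS2
  set G : ℝ := ∑' k : ℕ, p (k+1) * s^(k+1) with hGdef
  have hsum2 : ∑' k : ℕ, p (k+2) = 1 - p 1 := by
    have := Summable.tsum_eq_zero_add hpS
    rw [hp1] at this
    have h0 : p (0+1) = p 1 := by norm_num
    rw [h0] at this
    have : (1:ℝ) = p 1 + ∑' k : ℕ, p (k+1+1) := this
    have heq : (∑' k : ℕ, p (k+1+1)) = ∑' k : ℕ, p (k+2) :=
      tsum_congr fun k => rfl
    linarith [heq ▸ this]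
  have hG2 : ∑' k : ℕ, p (k+2) * s^(k+2) = G - p 1 * s := by
    have := Summable.tsum_eq_zero_add SG
    rw [← hGdef] at this
    have h0 : p (0+1) * s^(0+1) = p 1 * s := by norm_num
    rw [h0] at this
    have heq : (∑' k : ℕ, p (k+1+1) * s^(k+1+1)) = ∑' k : ℕ, p (k+2) * s^(k+2) :=
      tsum_congr fun k => rfl
    rw [heq] at this
    linarith
  have hGs : ∑' k : ℕ, p (k+1) * s^(k+2) = s * G := by
    rw [hGdef, ← tsum_mul_left]
    exact tsum_congr fun k => by ring
  have hterm : ∀ k : ℕ, (p (k+1) - p (k+2)) * (s * (1 - s^(k+1)))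
      = (p (k+1) * s - p (k+2) * s) - (p (k+1) * s^(k+2) - p (k+2) * s^(k+2)) := by
    intro k; ring
  rw [tsum_congr hterm]
  rw [Summable.tsum_sub ((hpS.mul_right s).sub (hpS2.mul_right s)) (SGs.sub SG2s),
    Summable.tsum_sub (hpS.mul_right s) (hpS2.mul_right s), Summable.tsum_sub SGs SG2s,
    tsum_mul_right, tsum_mul_right, hp1, hsum2, hGs, hG2]
  ring
set_option maxHeartbeats 1600000 in
theorem stein_pgf_characterization
    {Ω : Type*} [MeasurableSpace Ω] (P : Measure Ω) [IsProbabilityMeasure P]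
    (X : Ω → ℕ) (hXm : Measurable X) (hX1 : ∀ ω, 1 ≤ X ω)
    (p : ℕ → ℝ) (hp_pos : ∀ k : ℕ, 1 ≤ k → 0 < p k)
    (hp_sum : ∑' k : ℕ, p (k + 1) = 1) :
    (∀ k : ℕ, 1 ≤ k → P (X ⁻¹' {k}) = ENNReal.ofReal (p k)) ↔
      ∀ s ∈ Set.Ioo (0:ℝ) 1,
        (1 - s) * (∫ ω, s ^ (X ω) ∂P) =
          ∫ ω, (-((p (X ω + 1) - p (X ω)) / p (X ω))) * s * (1 - s ^ (X ω)) ∂P := by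
  classical
  -- basic set-up
  set q : ℕ → ℝ := fun k => (P (X ⁻¹' {k})).toReal with hqdef
  have hq0set : X ⁻¹' ({0} : Set ℕ) = ∅ := by
    ext ω
    simp only [Set.mem_preimage, Set.mem_singleton_iff, Set.mem_empty_iff_false, iff_false]
    intro h
    have := hX1 ω
    omega
  have hq0 : q 0 = 0 := by simp [hqdef, hq0set]
  have hqnn : ∀ k, 0 ≤ q k := fun k => ENNReal.toReal_nonneg
  have hPtsum : ∑' k : ℕ, P (X ⁻¹' {k}) = 1 := by
    have hdisj : Pairwise (Function.onFun Disjoint fun k : ℕ => X ⁻¹' {k}) := by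
      intro i j hij
      exact Disjoint.preimage X (by simp [hij])
    have hm : ∀ k : ℕ, MeasurableSet (X ⁻¹' {k}) := fun k => hXm (measurableSet_singleton k)
    rw [← measure_iUnion hdisj hm]
    have huniv : (⋃ k : ℕ, X ⁻¹' {k}) = Set.univ := by
      rw [← Set.preimage_iUnion]
      simp [Set.iUnion_of_singleton]
    rw [huniv, measure_univ]
  have hqsum : Summable q := ENNReal.summable_toReal (by rw [hPtsum]; exact ENNReal.one_ne_top)
  have hqtsum : ∑' k, q k = 1 := by
    have h := ENNReal.tsum_toReal_eq (f := fun k : ℕ => P (X ⁻¹' {k})) (fun k => measure_ne_top P _)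
    rw [hPtsum] at h
    simpa using h.symm
  have hq1sum : Summable fun k => q (k+1) := (summable_nat_add_iff 1).2 hqsum
  have hqtsum1 : ∑' k : ℕ, q (k+1) = 1 := by
    have h := Summable.tsum_eq_zero_add hqsum
    rw [hqtsum, hq0] at h
    linarith
  have hpS : Summable fun k => p (k+1) := by
    by_contra h
    rw [tsum_eq_zero_of_not_summable h] at hp_sum
    norm_num at hp_sum
  have hpnn : ∀ k : ℕ, 0 ≤ p (k+1) := fun k => (hp_pos (k+1) (by omega)).le
  set c : ℕ → ℝ := fun k => -((p (k+1) - p k) / p k) with hcdef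
  have hpc : ∀ k : ℕ, p (k+1) * c (k+1) = p (k+1) - p (k+2) := by
    intro k
    have hne : p (k+1) ≠ 0 := (hp_pos (k+1) (by omega)).ne'
    show p (k+1) * (-((p (k+2) - p (k+1)) / p (k+1))) = p (k+1) - p (k+2)
    field_simp
    ring
  -- PGF-side facts, valid for any s ∈ (0,1)
  have hf1sum : ∀ s : ℝ, s ∈ Set.Ioo (0:ℝ) 1 → Summable fun k => q k * s ^ k := by
    intro s hsmem
    obtain ⟨hs0, hs1⟩ := hsmem
    refine Summable.of_nonneg_of_le
      (fun k => mul_nonneg (hqnn k) (pow_nonneg hs0.le k)) (fun k => ?_) hqsum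
    nlinarith [pow_le_one₀ hs0.le hs1.le (n := k), pow_nonneg hs0.le k, hqnn k]
  have hf1int : ∀ s : ℝ, s ∈ Set.Ioo (0:ℝ) 1 → Integrable (fun ω => s ^ (X ω)) P := by
    intro s hsmem
    obtain ⟨hs0, hs1⟩ := hsmem
    refine (aux_integrable_iff P X hXm (fun k => s ^ k)).2 ?_
    refine Summable.of_nonneg_of_le
      (fun k => mul_nonneg (hqnn k) (abs_nonneg _)) (fun k => ?_) hqsum
    have h1 : |s ^ k| = s ^ k := abs_of_nonneg (pow_nonneg hs0.le k)
    rw [h1]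
    nlinarith [pow_le_one₀ hs0.le hs1.le (n := k), pow_nonneg hs0.le k, hqnn k]
  have hGeq : ∀ s : ℝ, s ∈ Set.Ioo (0:ℝ) 1 →
      ∫ ω, s ^ (X ω) ∂P = ∑' k, q k * s ^ k := fun s hsmem =>
    aux_integral_eq P X hXm (fun k => s ^ k) (hf1int s hsmem)
  have hGpos : ∀ s : ℝ, s ∈ Set.Ioo (0:ℝ) 1 → 0 < ∫ ω, s ^ (X ω) ∂P := by
    intro s hsmem
    obtain ⟨hs0, hs1⟩ := hsmem
    rw [integral_pos_iff_support_of_nonneg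
      (fun ω => pow_nonneg hs0.le _) (hf1int s ⟨hs0, hs1⟩)]
    have hs : (Function.support fun ω => s ^ (X ω)) = Set.univ := by
      ext ω
      simp only [Function.mem_support, Set.mem_univ, iff_true]
      exact (pow_pos hs0 _).ne'
    rw [hs, measure_univ]
    norm_num
  constructor
  · -- forward direction
    intro hPMF s hsmem
    obtain ⟨hs0, hs1⟩ := hsmem
    have hqp : ∀ k : ℕ, q (k+1) = p (k+1) := by
      intro k
      show (P (X ⁻¹' {k+1})).toReal = p (k+1)
      rw [hPMF (k+1) (by omega)]
      exact ENNReal.toReal_ofReal (hpnn k)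
    have hmaj : Summable fun k : ℕ => (if k = 0 then (0:ℝ) else p k + p (k+1)) := by
      apply (summable_nat_add_iff 1).1
      have h := hpS.add ((summable_nat_add_iff 1).2 hpS)
      exact h.congr fun k => by simp
    have hSf2 : Summable fun k : ℕ =>
        q k * |(-((p (k + 1) - p k) / p k)) * s * (1 - s ^ k)| := by
      refine Summable.of_nonneg_of_le
        (fun k => mul_nonneg (hqnn k) (abs_nonneg _)) (fun k => ?_) hmaj
      cases k with
      | zero => simp [hq0]
      | succ k =>
        have hpcabs : p (k+1) * |c (k+1)| = |p (k+1) - p (k+2)| := by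
          rw [← hpc k, abs_mul, abs_of_nonneg (hpnn k)]
        have hsb : |s * (1 - s^(k+1))| ≤ 1 := by
          have h1 : s^(k+1) ≤ 1 := pow_le_one₀ hs0.le hs1.le
          have h2 : 0 ≤ s^(k+1) := pow_nonneg hs0.le _
          rw [abs_of_nonneg (by nlinarith)]
          nlinarith
        have htri : |p (k+1) - p (k+2)| ≤ p (k+1) + p (k+2) := by
          calc |p (k+1) - p (k+2)| ≤ |p (k+1)| + |p (k+2)| := abs_sub _ _
            _ = p (k+1) + p (k+2) := by
              rw [abs_of_nonneg (hpnn k), abs_of_nonneg (hpnn (k+1))]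
        have habs1 : |(-((p (k + 1 + 1) - p (k + 1)) / p (k + 1))) * s * (1 - s^(k+1))|
            = |c (k+1)| * |s * (1 - s^(k+1))| := by
          rw [mul_assoc, abs_mul]
        simp only [if_neg (Nat.succ_ne_zero k)]
        rw [hqp k, habs1]
        calc p (k+1) * (|c (k+1)| * |s * (1 - s^(k+1))|)
            ≤ p (k+1) * (|c (k+1)| * 1) :=
              mul_le_mul_of_nonneg_left
                (mul_le_mul_of_nonneg_left hsb (abs_nonneg _)) (hpnn k)
          _ = |p (k+1) - p (k+2)| := by rw [mul_one]; exact hpcabs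
          _ ≤ p (k+1) + p (k+2) := htri
    have hInt2 : Integrable
        (fun ω => (-((p (X ω + 1) - p (X ω)) / p (X ω))) * s * (1 - s ^ (X ω))) P :=
      (aux_integrable_iff P X hXm
        (fun k => (-((p (k + 1) - p k) / p k)) * s * (1 - s ^ k))).2 hSf2
    have hval2 : ∫ ω, (-((p (X ω + 1) - p (X ω)) / p (X ω))) * s * (1 - s ^ (X ω)) ∂P
        = ∑' k : ℕ, q k * ((-((p (k + 1) - p k) / p k)) * s * (1 - s ^ k)) :=
      aux_integral_eq P X hXm (fun k => (-((p (k + 1) - p k) / p k)) * s * (1 - s ^ k)) hInt2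
    have habs2 : ∀ k : ℕ, |q k * ((-((p (k + 1) - p k) / p k)) * s * (1 - s ^ k))|
        = q k * |(-((p (k + 1) - p k) / p k)) * s * (1 - s ^ k)| := fun k => by
      rw [abs_mul, abs_of_nonneg (hqnn k)]
    have hSf2' : Summable fun k : ℕ =>
        q k * ((-((p (k + 1) - p k) / p k)) * s * (1 - s ^ k)) :=
      Summable.of_abs (hSf2.congr fun k => (habs2 k).symm)
    have hship : ∑' k : ℕ, q k * ((-((p (k + 1) - p k) / p k)) * s * (1 - s ^ k))
        = ∑' k : ℕ, (p (k+1) - p (k+2)) * (s * (1 - s^(k+1))) := by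
      rw [Summable.tsum_eq_zero_add hSf2']
      rw [hq0, zero_mul, zero_add]
      refine tsum_congr fun k => ?_
      rw [hqp k]
      have : (p (k+1)) * ((-((p (k + 1 + 1) - p (k + 1)) / p (k + 1))) * s * (1 - s ^ (k+1)))
          = (p (k+1) * c (k+1)) * (s * (1 - s^(k+1))) := by ring
      rw [this, hpc k]
    have hGship : ∑' k : ℕ, q k * s ^ k = ∑' k : ℕ, p (k+1) * s^(k+1) := by
      rw [Summable.tsum_eq_zero_add (hf1sum s ⟨hs0, hs1⟩), hq0, zero_mul, zero_add]
      exact tsum_congr fun k => by rw [hqp k]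
    rw [hGeq s ⟨hs0, hs1⟩, hval2, hGship, hship]
    exact aux_forward p hpnn hpS hp_sum hs0 hs1
  · -- backward direction
    intro hEq
    have hmain : ∀ s : ℝ, s ∈ Set.Ioo (0:ℝ) 1 →
        (Summable fun k : ℕ => q k * |(-((p (k + 1) - p k) / p k)) * s * (1 - s ^ k)|) ∧
        (1-s) * (∑' k : ℕ, q k * s ^ k)
          = ∑' k : ℕ, q k * ((-((p (k + 1) - p k) / p k)) * s * (1 - s ^ k)) := by
      intro s hsmem
      obtain ⟨hs0, hs1⟩ := hsmem
      have hInt2 : Integrable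
          (fun ω => (-((p (X ω + 1) - p (X ω)) / p (X ω))) * s * (1 - s ^ (X ω))) P := by
        by_contra h
        have h0 := integral_undef h
        have hE := hEq s ⟨hs0, hs1⟩
        rw [h0] at hE
        have := hGpos s ⟨hs0, hs1⟩
        nlinarith
      refine ⟨(aux_integrable_iff P X hXm
          (fun k => (-((p (k + 1) - p k) / p k)) * s * (1 - s ^ k))).1 hInt2, ?_⟩
      rw [← hGeq s ⟨hs0, hs1⟩, hEq s ⟨hs0, hs1⟩]
      exact aux_integral_eq P X hXm
        (fun k => (-((p (k + 1) - p k) / p k)) * s * (1 - s ^ k)) hInt2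
    have hck : ∀ k : ℕ, (-((p (k + 1) - p k) / p k)) = c k := fun k => rfl
    have hSb : Summable fun k : ℕ => q k * c k := by
      have h := (hmain (1/2) (by norm_num)).1
      have habs : Summable fun k : ℕ => q k * |c k| := by
        refine Summable.of_nonneg_of_le
          (fun k => mul_nonneg (hqnn k) (abs_nonneg _)) (fun k => ?_) (h.mul_left 4)
        cases k with
        | zero => simp [hq0]
        | succ k =>
          have h1 : ((1:ℝ)/2)^(k+1) ≤ 1/2 := by
            calc ((1:ℝ)/2)^(k+1) ≤ ((1:ℝ)/2)^1 :=
                  pow_le_pow_of_le_one (by norm_num) (by norm_num) (by omega)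
              _ = 1/2 := pow_one _
          have h2 : (0:ℝ) ≤ ((1:ℝ)/2)^(k+1) := by positivity
          have habs1 : |(-((p (k + 1 + 1) - p (k + 1)) / p (k + 1))) * (1/2 : ℝ)
                * (1 - (1/2:ℝ) ^ (k+1))|
              = |c (k+1)| * ((1/2 : ℝ) * (1 - (1/2:ℝ) ^ (k+1))) := by
            rw [hck (k+1), mul_assoc, abs_mul,
              abs_of_nonneg (by nlinarith : (0:ℝ) ≤ (1/2 : ℝ) * (1 - (1/2:ℝ) ^ (k+1)))]
          show q (k+1) * |c (k+1)| ≤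
            4 * (q (k+1) * |(-((p (k + 1 + 1) - p (k + 1)) / p (k + 1))) * (1/2 : ℝ)
              * (1 - (1/2:ℝ) ^ (k+1))|)
          rw [habs1]
          nlinarith [hqnn (k+1), abs_nonneg (c (k+1)),
            mul_nonneg (hqnn (k+1)) (abs_nonneg (c (k+1)))]
      exact Summable.of_abs (habs.congr fun k => by rw [abs_mul, abs_of_nonneg (hqnn k)])
    set B : ℝ := ∑' k : ℕ, q k * c k with hBdef
    set d : ℕ → ℝ := fun k =>
      q k - (if k = 0 then 0 else q (k-1)) + (if k = 0 then 0 else q (k-1) * c (k-1))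
        - (if k = 1 then B else 0) with hddef
    have hdz : ∀ n, d n = 0 := by
      have hcomp : ∀ s : ℝ, s ∈ Set.Ioo (0:ℝ) 1 →
          (Summable fun k => d k * s ^ k) ∧ (∑' k, d k * s ^ k = 0) := by
        intro s hsmem
        obtain ⟨hs0, hs1⟩ := hsmem
        have hpow1 : ∀ m : ℕ, s ^ m ≤ 1 := fun m => pow_le_one₀ hs0.le hs1.le
        have hpownn : ∀ m : ℕ, (0:ℝ) ≤ s ^ m := fun m => pow_nonneg hs0.le m
        have S1 : Summable fun k => q k * s ^ k := hf1sum s ⟨hs0, hs1⟩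
        have St2shift : Summable fun k : ℕ => q k * s ^ (k+1) :=
          Summable.of_nonneg_of_le (fun k => mul_nonneg (hqnn k) (hpownn _))
            (fun k => by nlinarith [hpow1 (k+1), hqnn k, hpownn (k+1)]) hqsum
        have St2 : Summable fun k : ℕ => (if k = 0 then 0 else q (k-1)) * s ^ k := by
          apply (summable_nat_add_iff 1).1
          exact St2shift.congr fun k => by simp
        have Sbs : Summable fun k : ℕ => q k * c k * s ^ (k+1) := by
          refine Summable.of_abs ?_
          refine Summable.of_nonneg_of_le (fun k => abs_nonneg _) (fun k => ?_) hSb.abs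
          rw [abs_mul, abs_of_nonneg (hpownn (k+1))]
          nlinarith [abs_nonneg (q k * c k), hpow1 (k+1), hpownn (k+1)]
        have St3 : Summable fun k : ℕ => (if k = 0 then 0 else q (k-1) * c (k-1)) * s ^ k := by
          apply (summable_nat_add_iff 1).1
          exact Sbs.congr fun k => by simp
        have ht4eq : (fun k : ℕ => (if k = 1 then B else 0) * s ^ k)
            = fun k : ℕ => if k = 1 then B * s else 0 := by
          funext k
          split_ifs with h
          · rw [h, pow_one]
          · rw [zero_mul]
        have St4 : Summable fun k : ℕ => (if k = 1 then B else 0) * s ^ k := by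
          rw [ht4eq]; exact (hasSum_ite_eq 1 (B*s)).summable
        have hde : (fun k : ℕ => d k * s ^ k) = fun k : ℕ =>
            q k * s ^ k - (if k = 0 then 0 else q (k-1)) * s ^ k
              + (if k = 0 then 0 else q (k-1) * c (k-1)) * s ^ k
              - (if k = 1 then B else 0) * s ^ k := by
          funext k
          simp only [hddef]
          ring
        have hSd : Summable fun k : ℕ => d k * s ^ k := by
          rw [hde]; exact ((S1.sub St2).add St3).sub St4
        refine ⟨hSd, ?_⟩
        have T2 : ∑' k : ℕ, (if k = 0 then 0 else q (k-1)) * s ^ k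
            = ∑' k : ℕ, q k * s ^ (k+1) := by
          rw [Summable.tsum_eq_zero_add St2]
          simp
        have T2val : ∑' k : ℕ, q k * s ^ (k+1) = s * ∑' k : ℕ, q k * s ^ k := by
          rw [← tsum_mul_left]
          exact tsum_congr fun k => by ring
        have T3 : ∑' k : ℕ, (if k = 0 then 0 else q (k-1) * c (k-1)) * s ^ k
            = ∑' k : ℕ, q k * c k * s ^ (k+1) := by
          rw [Summable.tsum_eq_zero_add St3]
          simp
        have T4 : ∑' k : ℕ, (if k = 1 then B else 0) * s ^ k = B * s := by
          rw [ht4eq]; exact (hasSum_ite_eq 1 (B*s)).tsum_eq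
        have hsplit2 : ∑' k : ℕ, q k * ((-((p (k + 1) - p k) / p k)) * s * (1 - s ^ k))
            = B * s - ∑' k : ℕ, q k * c k * s ^ (k+1) := by
          have hterm : ∀ k : ℕ, q k * ((-((p (k + 1) - p k) / p k)) * s * (1 - s ^ k))
              = q k * c k * s - q k * c k * s ^ (k+1) := by
            intro k
            rw [hck k]
            ring
          rw [tsum_congr hterm, Summable.tsum_sub (hSb.mul_right s) Sbs, tsum_mul_right]
        have hE := (hmain s ⟨hs0, hs1⟩).2
        rw [hsplit2] at hE
        rw [hde, Summable.tsum_sub ((S1.sub St2).add St3) St4, Summable.tsum_add (S1.sub St2) St3,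
          Summable.tsum_sub S1 St2, T2, T2val, T3, T4]
        have hexp : (1-s) * (∑' k : ℕ, q k * s ^ k)
            = (∑' k : ℕ, q k * s ^ k) - s * (∑' k : ℕ, q k * s ^ k) := by ring
        rw [hexp] at hE
        linarith
      exact aux_coeff_zero d (fun s h => (hcomp s h).1) (fun s h => (hcomp s h).2)
    have hp1ne : p 1 ≠ 0 := (hp_pos 1 (by omega)).ne'
    have hrec : ∀ m : ℕ, q (m+2) = q (m+1) * p (m+2) / p (m+1) := by
      intro m
      have h := hdz (m+2)
      have hd2 : d (m+2) = q (m+2) - q (m+1) + q (m+1) * c (m+1) := by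
        have h1 : ¬(m + 2 = 0) := by omega
        have h2 : ¬(m + 2 = 1) := by omega
        simp only [hddef, if_neg h1, if_neg h2]
        norm_num
      rw [hd2] at h
      have hne : p (m+1) ≠ 0 := (hp_pos (m+1) (by omega)).ne'
      have hc2 : p (m+2) / p (m+1) = 1 - c (m+1) := by
        show _ = 1 - (-((p (m+2) - p (m+1)) / p (m+1)))
        field_simp
        ring
      rw [mul_div_assoc, hc2]
      linear_combination h
    have hlin : ∀ m : ℕ, q (m+1) * p 1 = q 1 * p (m+1) := by
      intro m
      induction m with
      | zero => ring
      | succ m ih =>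
        have hne : p (m+1) ≠ 0 := (hp_pos (m+1) (by omega)).ne'
        rw [hrec m]
        field_simp
        linear_combination p (m+2) * ih
    have hq1 : q 1 = p 1 := by
      have hterm : ∀ k : ℕ, q (k+1) = q 1 / p 1 * p (k+1) := by
        intro k
        have h := hlin k
        field_simp
        linarith [h]
      have h1 : ∑' k : ℕ, q (k+1) = q 1 / p 1 * ∑' k : ℕ, p (k+1) := by
        rw [← tsum_mul_left]
        exact tsum_congr hterm
      rw [hqtsum1, hp_sum, mul_one] at h1
      field_simp at h1
      linarith
    have hqfin : ∀ k : ℕ, q (k+1) = p (k+1) := by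
      intro k
      have h := hlin k
      rw [hq1] at h
      have h2 : q (k+1) * p 1 = p (k+1) * p 1 := by linarith [h]
      exact mul_right_cancel₀ hp1ne h2
    intro k hk
    obtain ⟨m, rfl⟩ : ∃ m, k = m + 1 := ⟨k - 1, by omega⟩
    have hfin : P (X ⁻¹' {m+1}) = ENNReal.ofReal (q (m+1)) :=
      (ENNReal.ofReal_toReal (measure_ne_top P _)).symm
    rw [hfin, hqfin m]
end

section
/- Let ν > 1 and let X be a random variable taking values in ℕ = {1,2,3,...} with probability generating function G_X(s) = E[s^X]. Then X follows the DPareto(ν) distribution (i.e. P(X = k) = k^{-ν}/ζ(ν) for all k ∈ ℕ) if and only if for every s ∈ (0,1): (1 - s)·G_X(s) = E[ (1 - (X/(X+1))^ν) · s · (1 - s^X) ]. -/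
open MeasureTheory Real Filter Set

section aux

lemma tsum_pow_eq_zero (a : ℕ → ℝ) (ha : Summable fun k => |a k|)
    (h : ∀ s ∈ Set.Ioo (0:ℝ) 1, ∑' k, a k * s ^ k = 0) : ∀ n, a n = 0 := by
  intro n
  induction n using Nat.strong_induction_on with
  | _ n ih =>
  set C := ∑' k, |a k| with hCdef
  have hC0 : 0 ≤ C := tsum_nonneg fun k => abs_nonneg _
  have key : ∀ s ∈ Set.Ioo (0:ℝ) 1, |a n| ≤ s * (C + 1) := by
    intro s hs
    obtain ⟨hs0, hs1⟩ := hs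
    have hsle : ∀ k : ℕ, s ^ k ≤ 1 := fun k => pow_le_one₀ hs0.le hs1.le
    have hspos : ∀ k : ℕ, (0:ℝ) < s ^ k := fun k => pow_pos hs0 k
    have hbnd : ∀ k : ℕ, ‖a (k + (n+1)) * s ^ (k + (n + 1))‖ ≤ |a (k + (n+1))| * s ^ (n+1) := by
      intro k
      rw [norm_mul, norm_pow, Real.norm_eq_abs, Real.norm_eq_abs, abs_of_pos hs0]
      apply mul_le_mul_of_nonneg_left _ (abs_nonneg _)
      rw [pow_add]
      calc s ^ k * s ^ (n+1) ≤ 1 * s ^ (n+1) :=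
            mul_le_mul_of_nonneg_right (hsle k) (hspos (n+1)).le
        _ = s ^ (n+1) := one_mul _
    have hsummaj : Summable fun k => |a (k + (n+1))| * s ^ (n+1) :=
      ((summable_nat_add_iff (n+1)).mpr ha).mul_right (s ^ (n+1))
    have hsumtail : Summable fun k => a (k + (n+1)) * s ^ (k + (n+1)) :=
      Summable.of_norm_bounded hsummaj hbnd
    have hsum : Summable fun k => a k * s ^ k := by
      apply Summable.of_norm_bounded ha
      intro k
      rw [norm_mul, norm_pow, Real.norm_eq_abs, Real.norm_eq_abs, abs_of_pos hs0]
      calc |a k| * s ^ k ≤ |a k| * 1 :=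
            mul_le_mul_of_nonneg_left (hsle k) (abs_nonneg _)
        _ = |a k| := mul_one _
    have hsplit := Summable.sum_add_tsum_nat_add (n + 1) hsum
    rw [h s ⟨hs0, hs1⟩] at hsplit
    have hfin : ∑ k ∈ Finset.range (n + 1), a k * s ^ k = a n * s ^ n := by
      rw [Finset.sum_range_succ]
      have : ∑ k ∈ Finset.range n, a k * s ^ k = 0 :=
        Finset.sum_eq_zero fun k hk => by rw [ih k (Finset.mem_range.mp hk), zero_mul]
      rw [this, zero_add]
    rw [hfin] at hsplit
    have htail : a n * s ^ n = -∑' k, a (k + (n + 1)) * s ^ (k + (n + 1)) := by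
      linarith
    have h1 : |a n * s ^ n| ≤ ∑' k, |a (k + (n + 1))| * s ^ (n + 1) := by
      rw [htail, abs_neg]
      exact (norm_tsum_le_tsum_norm hsumtail.norm).trans
        (Summable.tsum_le_tsum hbnd hsumtail.norm hsummaj)
    have h2 : ∑' k, |a (k + (n + 1))| * s ^ (n + 1) ≤ s ^ (n + 1) * C := by
      rw [tsum_mul_right, mul_comm]
      apply mul_le_mul_of_nonneg_left _ (hspos (n+1)).le
      have := Summable.sum_add_tsum_nat_add (n+1) ha
      have hfs : 0 ≤ ∑ k ∈ Finset.range (n+1), |a k| :=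
        Finset.sum_nonneg fun k _ => abs_nonneg _
      linarith
    rw [abs_mul, abs_of_pos (hspos n)] at h1
    have habs' : |a n| * s ^ n ≤ s * C * s ^ n := by
      have : s ^ (n+1) * C = s * C * s ^ n := by ring
      linarith [h1.trans h2, this.le]
    have h3 : |a n| ≤ s * C := le_of_mul_le_mul_right habs' (hspos n)
    nlinarith
  by_contra hne
  have hpos : 0 < |a n| := abs_pos.mpr hne
  have hCle : |a n| ≤ C := Summable.le_tsum ha n fun k _ => abs_nonneg _
  set s : ℝ := |a n| / (2 * (C + 1)) with hsdef
  have hs0 : 0 < s := div_pos hpos (by linarith)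
  have hs1 : s < 1 := by
    rw [hsdef, div_lt_one (by linarith)]
    linarith
  have hk := key s ⟨hs0, hs1⟩
  have : s * (C + 1) = |a n| / 2 := by
    rw [hsdef]; field_simp
  linarith

lemma integral_nat_comp {Ω : Type*} [MeasurableSpace Ω] (P : Measure Ω) [IsProbabilityMeasure P]
    (X : Ω → ℕ) (hXm : Measurable X) (f : ℕ → ℝ) (C : ℝ) (hf : ∀ k, |f k| ≤ C) :
    ∫ ω, f (X ω) ∂P = ∑' k, (P (X ⁻¹' {k})).toReal * f k := by
  have hfae : AEStronglyMeasurable f (P.map X) :=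
    (measurable_from_top (f := f)).aestronglyMeasurable
  have : IsProbabilityMeasure (P.map X) := Measure.isProbabilityMeasure_map hXm.aemeasurable
  have hint : Integrable f (P.map X) :=
    ⟨hfae, HasFiniteIntegral.of_bounded (C := C) (Filter.Eventually.of_forall fun k => by
      simpa using hf k)⟩
  rw [← integral_map hXm.aemeasurable hfae, integral_countable' hint]
  refine tsum_congr fun k => ?_
  rw [measureReal_def, Measure.map_apply hXm (measurableSet_singleton k), smul_eq_mul]

lemma zeta_summable {ν : ℝ} (hν : 1 < ν) : Summable (fun k : ℕ => ((k : ℝ) + 1) ^ (-ν)) := by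
  have : Summable (fun k : ℕ => ((k : ℝ)) ^ (-ν)) :=
    Real.summable_nat_rpow.mpr (by linarith)
  have h2 := (summable_nat_add_iff 1).mpr this
  refine h2.congr fun k => ?_
  push_cast
  ring_nf

lemma rpow_step {ν : ℝ} (k : ℕ) (hk : 1 ≤ k) :
    ((k : ℝ)) ^ (-ν) * ((k : ℝ) / ((k : ℝ) + 1)) ^ ν = ((k : ℝ) + 1) ^ (-ν) := by
  have hk0 : (0:ℝ) < (k : ℝ) := by exact_mod_cast hk
  have hk1 : (0:ℝ) < (k : ℝ) + 1 := by linarith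
  rw [Real.div_rpow hk0.le hk1.le, Real.rpow_neg hk0.le, Real.rpow_neg hk1.le]
  field_simp [Real.rpow_natCast, ne_of_gt (Real.rpow_pos_of_pos hk0 ν),
    ne_of_gt (Real.rpow_pos_of_pos hk1 ν)]

lemma t_mem {ν : ℝ} (hν : 0 < ν) (k : ℕ) :
    0 ≤ ((k : ℝ) / ((k : ℝ) + 1)) ^ ν ∧ ((k : ℝ) / ((k : ℝ) + 1)) ^ ν ≤ 1 := by
  have hk0 : (0:ℝ) ≤ (k : ℝ) := Nat.cast_nonneg k
  have hb0 : (0:ℝ) ≤ (k : ℝ) / ((k : ℝ) + 1) := by positivity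
  have hb1 : (k : ℝ) / ((k : ℝ) + 1) ≤ 1 := by
    rw [div_le_one (by linarith)]; linarith
  exact ⟨Real.rpow_nonneg hb0 ν, Real.rpow_le_one hb0 hb1 hν.le⟩

lemma q_tsum {Ω : Type*} [MeasurableSpace Ω] (P : Measure Ω) [IsProbabilityMeasure P]
    (X : Ω → ℕ) (hXm : Measurable X) :
    (∑' k, P (X ⁻¹' {k}) = 1) ∧ Summable (fun k => (P (X ⁻¹' {k})).toReal) ∧
      ∑' k, (P (X ⁻¹' {k})).toReal = 1 := by
  have hdis : Pairwise (Function.onFun Disjoint fun k : ℕ => X ⁻¹' {k}) := by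
    intro i j hij
    exact Set.disjoint_left.mpr fun x hx hx' => hij (hx.symm.trans hx')
  have hmeas : ∀ k : ℕ, MeasurableSet (X ⁻¹' {k}) :=
    fun k => hXm (measurableSet_singleton k)
  have hunion : (⋃ k, X ⁻¹' {k}) = Set.univ := by
    ext x; simp
  have h1 : ∑' k, P (X ⁻¹' {k}) = 1 := by
    rw [← measure_iUnion hdis hmeas, hunion, measure_univ]
  have hne : ∀ k, P (X ⁻¹' {k}) ≠ ⊤ := fun k => measure_ne_top P _
  refine ⟨h1, ?_, ?_⟩
  · exact ENNReal.summable_toReal (by rw [h1]; exact ENNReal.one_ne_top)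
  · rw [← ENNReal.tsum_toReal_eq hne, h1, ENNReal.toReal_one]

end aux

theorem dpareto_pgf_characterization
    {Ω : Type*} [MeasurableSpace Ω] (P : Measure Ω) [IsProbabilityMeasure P]
    (X : Ω → ℕ) (hXm : Measurable X) (hX1 : ∀ ω, 1 ≤ X ω)
    (ν : ℝ) (hν : 1 < ν) :
    IsDPareto P X ν ↔
      ∀ s ∈ Set.Ioo (0:ℝ) 1,
        (1 - s) * (∫ ω, s ^ (X ω) ∂P) =
          ∫ ω, (1 - ((X ω : ℝ) / ((X ω : ℝ) + 1)) ^ ν) * s * (1 - s ^ (X ω)) ∂P := by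
  have hν0 : (0:ℝ) < ν := by linarith
  set t : ℕ → ℝ := fun k => ((k : ℝ) / ((k : ℝ) + 1)) ^ ν with htdef
  set q : ℕ → ℝ := fun k => (P (X ⁻¹' {k})).toReal with hqdef
  obtain ⟨-, hqsum, hqone⟩ := q_tsum P X hXm
  have hq0 : q 0 = 0 := by
    have hempty : X ⁻¹' {0} = ∅ := by
      ext ω
      simp only [Set.mem_preimage, Set.mem_singleton_iff, Set.mem_empty_iff_false, iff_false]
      exact fun h => by have := hX1 ω; omega
    simp [hqdef, hempty]
  have hqnn : ∀ k, 0 ≤ q k := fun k => ENNReal.toReal_nonneg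
  have ht0 : ∀ k, 0 ≤ t k := fun k => (t_mem hν0 k).1
  have ht1 : ∀ k, t k ≤ 1 := fun k => (t_mem hν0 k).2
  set r : ℕ → ℝ := fun k => q k * t k with hrdef
  have hrnn : ∀ k, 0 ≤ r k := fun k => mul_nonneg (hqnn k) (ht0 k)
  have hrle : ∀ k, r k ≤ q k := fun k => by
    calc r k = q k * t k := rfl
      _ ≤ q k * 1 := mul_le_mul_of_nonneg_left (ht1 k) (hqnn k)
      _ = q k := mul_one _
  have hrsum : Summable r := hqsum.of_nonneg_of_le hrnn hrle
  set R : ℝ := ∑' k, r k with hRdef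
  set b : ℕ → ℝ := fun k => Nat.casesOn k 0 r with hbdef
  have hbsucc : ∀ k, b (k + 1) = r k := fun k => rfl
  have hb0 : b 0 = 0 := rfl
  have hbnn : ∀ k, 0 ≤ b k := by
    intro k; cases k with
    | zero => exact le_of_eq hb0.symm
    | succ m => rw [hbsucc]; exact hrnn m
  have hbsum : Summable b := (summable_nat_add_iff 1).mp (hrsum.congr fun n => rfl)
  set e : ℕ → ℝ := fun k => if k = 1 then 1 - R else 0 with hedef
  have hesum : Summable e := (hasSum_ite_eq 1 (1 - R)).summable
  set c : ℕ → ℝ := fun k => q k - b k - e k with hcdef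
  have hcabs : Summable fun k => |c k| := by
    apply Summable.of_nonneg_of_le (fun k => abs_nonneg _) (fun k => ?_)
      ((hqsum.add hbsum).add hesum.abs)
    calc |c k| = |q k - b k - e k| := rfl
      _ ≤ |q k - b k| + |e k| := abs_sub _ _
      _ ≤ |q k| + |b k| + |e k| := by gcongr; exact abs_sub _ _
      _ = q k + b k + |e k| := by rw [abs_of_nonneg (hqnn k), abs_of_nonneg (hbnn k)]
  -- per-s equivalence
  have key : ∀ s ∈ Set.Ioo (0:ℝ) 1,
      ((1 - s) * (∫ ω, s ^ (X ω) ∂P) =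
        ∫ ω, (1 - ((X ω : ℝ) / ((X ω : ℝ) + 1)) ^ ν) * s * (1 - s ^ (X ω)) ∂P) ↔
      ∑' k, c k * s ^ k = 0 := by
    intro s hs
    obtain ⟨hs0, hs1⟩ := hs
    have hsp : ∀ k : ℕ, 0 ≤ s ^ k := fun k => (pow_pos hs0 k).le
    have hsle : ∀ k : ℕ, s ^ k ≤ 1 := fun k => pow_le_one₀ hs0.le hs1.le
    have hA : ∫ ω, s ^ (X ω) ∂P = ∑' k, q k * s ^ k :=
      integral_nat_comp P X hXm (fun k => s ^ k) 1
        (fun k => le_trans (le_of_eq (abs_of_nonneg (hsp k))) (hsle k))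
    have hB : ∫ ω, (1 - ((X ω : ℝ) / ((X ω : ℝ) + 1)) ^ ν) * s * (1 - s ^ (X ω)) ∂P
        = ∑' k, q k * ((1 - t k) * s * (1 - s ^ k)) := by
      apply integral_nat_comp P X hXm (fun k => (1 - t k) * s * (1 - s ^ k)) 1
      intro k
      have h1 : 0 ≤ 1 - t k := by linarith [ht1 k]
      have h2 : 1 - t k ≤ 1 := by linarith [ht0 k]
      have h3 : 0 ≤ 1 - s ^ k := by linarith [hsle k]
      have h4 : 1 - s ^ k ≤ 1 := by linarith [hsp k]
      rw [abs_of_nonneg (mul_nonneg (mul_nonneg h1 hs0.le) h3)]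
      have hx : (1 - t k) * s ≤ 1 := by nlinarith [mul_le_mul_of_nonneg_right h2 hs0.le]
      have := mul_le_mul hx h4 h3 zero_le_one
      linarith
    rw [hA, hB]
    -- summabilities
    have hsq : Summable fun k => q k * s ^ k :=
      hqsum.of_nonneg_of_le (fun k => mul_nonneg (hqnn k) (hsp k))
        (fun k => by calc q k * s ^ k ≤ q k * 1 := mul_le_mul_of_nonneg_left (hsle k) (hqnn k)
                       _ = q k := mul_one _)
    have hsr : Summable fun k => r k * s ^ k :=
      hrsum.of_nonneg_of_le (fun k => mul_nonneg (hrnn k) (hsp k))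
        (fun k => by calc r k * s ^ k ≤ r k * 1 := mul_le_mul_of_nonneg_left (hsle k) (hrnn k)
                       _ = r k := mul_one _)
    have hsb : Summable fun k => b k * s ^ k :=
      hbsum.of_nonneg_of_le (fun k => mul_nonneg (hbnn k) (hsp k))
        (fun k => by calc b k * s ^ k ≤ b k * 1 := mul_le_mul_of_nonneg_left (hsle k) (hbnn k)
                       _ = b k := mul_one _)
    set A : ℝ := ∑' k, q k * s ^ k with hAdef
    set B0 : ℝ := ∑' k, r k * s ^ k with hB0def
    -- RHS expansion
    have hrhs : ∑' k, q k * ((1 - t k) * s * (1 - s ^ k))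
        = s - s * A - s * R + s * B0 := by
      have hexp : ∀ k, q k * ((1 - t k) * s * (1 - s ^ k))
          = (s * q k - s * (q k * s ^ k) - s * r k) + s * (r k * s ^ k) := by
        intro k
        simp only [hrdef]
        ring
      rw [tsum_congr hexp,
        Summable.tsum_add (((hqsum.mul_left s).sub (hsq.mul_left s)).sub (hrsum.mul_left s))
          (hsr.mul_left s),
        Summable.tsum_sub ((hqsum.mul_left s).sub (hsq.mul_left s)) (hrsum.mul_left s),
        Summable.tsum_sub (hqsum.mul_left s) (hsq.mul_left s),
        tsum_mul_left, tsum_mul_left, tsum_mul_left, tsum_mul_left, hqone]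
      ring
    rw [hrhs]
    -- LHS of iff becomes algebra; express tsum of c
    have hctsum : ∑' k, c k * s ^ k = A - s * B0 - s * (1 - R) := by
      have hcterm : ∀ k, c k * s ^ k = q k * s ^ k - b k * s ^ k - e k * s ^ k := by
        intro k
        simp only [hcdef]
        ring
      have hse : Summable fun k => e k * s ^ k := by
        apply Summable.congr (f := fun k => if k = 1 then (1 - R) * s else 0)
        · exact (hasSum_ite_eq 1 ((1 - R) * s)).summable
        · intro k
          simp only [hedef]
          by_cases hk : k = 1
          · subst hk; simp
          · simp [hk]
      have hetsum : ∑' k, e k * s ^ k = (1 - R) * s := by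
        have : ∀ k : ℕ, e k * s ^ k = if k = 1 then (1 - R) * s else 0 := by
          intro k
          simp only [hedef]
          by_cases hk : k = 1
          · subst hk; simp
          · simp [hk]
        rw [tsum_congr this, tsum_ite_eq]
      have hbtsum : ∑' k, b k * s ^ k = s * B0 := by
        rw [Summable.tsum_eq_zero_add hsb]
        have : ∀ k : ℕ, b (k + 1) * s ^ (k + 1) = s * (r k * s ^ k) := by
          intro k
          rw [hbsucc]
          ring
        rw [tsum_congr this, tsum_mul_left, hb0]
        ring
      rw [tsum_congr hcterm, Summable.tsum_sub (hsq.sub hsb) hse, Summable.tsum_sub hsq hsb,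
        hbtsum, hetsum]
      ring
    rw [hctsum]
    constructor
    · intro h; linarith
    · intro h; linarith
  -- zeta facts
  have hζsum : Summable (fun k : ℕ => ((k : ℝ) + 1) ^ (-ν)) := zeta_summable hν
  have hζpos : 0 < zetaR ν := by
    have : (0:ℝ) < ((0 : ℕ) : ℝ) + 1 := by norm_num
    exact Summable.tsum_pos hζsum (fun k => Real.rpow_nonneg (by positivity) _) 0
      (Real.rpow_pos_of_pos this _)
  have hζne : zetaR ν ≠ 0 := ne_of_gt hζpos
  have hpsum : Summable (fun k : ℕ => dpPMF ν (k + 1)) := by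
    apply Summable.congr (f := fun k : ℕ => ((k : ℝ) + 1) ^ (-ν) / zetaR ν)
    · exact hζsum.div_const _
    · intro k
      simp only [dpPMF]
      push_cast
      ring_nf
  have hp1 : ∑' k : ℕ, dpPMF ν (k + 1) = 1 := by
    have h1 : ∑' k : ℕ, dpPMF ν (k + 1) = (∑' k : ℕ, ((k : ℝ) + 1) ^ (-ν)) / zetaR ν := by
      rw [← tsum_div_const]
      refine tsum_congr fun k => ?_
      simp only [dpPMF]
      push_cast
      ring_nf
    have hzr0 : (∑' k : ℕ, ((k : ℝ) + 1) ^ (-ν)) = zetaR ν := rfl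
    rw [h1, hzr0, div_self hζne]
  constructor
  · -- forward
    intro hdp s hs
    apply (key s hs).mpr
    have hqk : ∀ k : ℕ, 1 ≤ k → q k = dpPMF ν k := by
      intro k hk
      have hnn : 0 ≤ dpPMF ν k := div_nonneg (Real.rpow_nonneg (Nat.cast_nonneg k) _) hζpos.le
      simp only [hqdef]
      rw [hdp k hk, ENNReal.toReal_ofReal hnn]
    have hrk : ∀ k : ℕ, 1 ≤ k → r k = dpPMF ν (k + 1) := by
      intro k hk
      have : r k = q k * t k := rfl
      rw [this, hqk k hk]
      simp only [dpPMF, htdef]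
      rw [div_mul_eq_mul_div, rpow_step k hk]
      push_cast
      ring_nf
    have hr0 : r 0 = 0 := by
      have : r 0 = q 0 * t 0 := rfl
      rw [this, hq0, zero_mul]
    have hR : R = 1 - dpPMF ν 1 := by
      rw [hRdef, Summable.tsum_eq_zero_add hrsum, hr0, zero_add]
      have h2 : ∀ k : ℕ, r (k + 1) = dpPMF ν (k + 1 + 1) := fun k => hrk (k+1) (by omega)
      rw [tsum_congr h2]
      have h3 := Summable.tsum_eq_zero_add hpsum
      rw [hp1] at h3
      norm_num at h3
      linarith [h3]
    have hc : ∀ k, c k = 0 := by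
      intro k
      match k with
      | 0 => simp [hcdef, hq0, hb0, hedef]
      | 1 =>
        have hb1 : b 1 = r 0 := rfl
        have he1 : e 1 = 1 - R := by simp [hedef]
        have hc1 : c 1 = q 1 - b 1 - e 1 := rfl
        rw [hc1, hb1, he1, hr0, hqk 1 le_rfl, hR]
        ring
      | (m+2) =>
        have hbm : b (m+2) = r (m+1) := rfl
        have hem : e (m+2) = 0 := by simp [hedef]
        have hcm : c (m+2) = q (m+2) - b (m+2) - e (m+2) := rfl
        rw [hcm, hbm, hem, hqk (m+2) (by omega), hrk (m+1) (by omega)]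
        norm_num
    rw [tsum_congr (fun k => by rw [hc k, zero_mul] : ∀ k, c k * s ^ k = 0), tsum_zero]
  · -- backward
    intro hcond
    have hc := tsum_pow_eq_zero c hcabs (fun s hs => (key s hs).mp (hcond s hs))
    have hrec : ∀ k : ℕ, q (k + 2) = r (k + 1) := by
      intro k
      have h0 := hc (k + 2)
      have h1 : c (k+2) = q (k+2) - b (k+2) - e (k+2) := rfl
      have hbm : b (k+2) = r (k+1) := rfl
      have hem : e (k+2) = 0 := by simp [hedef]
      rw [h1, hbm, hem] at h0
      linarith
    have hzr : (∑' k : ℕ, ((k : ℝ) + 1) ^ (-ν)) = zetaR ν := rfl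
    have hqpow : ∀ k : ℕ, q (k + 1) = q 1 * (((k:ℝ) + 1)) ^ (-ν) := by
      intro k
      induction k with
      | zero => simp [Real.one_rpow]
      | succ m ihm =>
        have hstep : q (m + 1 + 1) = q (m + 1) * t (m + 1) := hrec m
        rw [hstep, ihm]
        have hts : t (m+1) = (((m+1:ℕ):ℝ) / (((m+1:ℕ):ℝ) + 1)) ^ ν := rfl
        have hrs := rpow_step (ν := ν) (m + 1) (by omega)
        rw [hts]
        push_cast at hrs ⊢
        rw [← hrs]
        ring
    have hq1 : q 1 * zetaR ν = 1 := by
      have h1 : ∑' k : ℕ, q (k + 1) = 1 := by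
        have h2 : ∑' k, q k = q 0 + ∑' k, q (k+1) := Summable.tsum_eq_zero_add hqsum
        rw [hq0, zero_add] at h2
        rw [← h2]
        exact hqone
      rw [tsum_congr hqpow, tsum_mul_left, hzr] at h1
      exact h1
    have hq1v : q 1 = (zetaR ν)⁻¹ := by
      have h := eq_div_of_mul_eq hζne hq1
      rw [h, one_div]
    intro k hk
    obtain ⟨m, rfl⟩ : ∃ m, k = m + 1 := ⟨k - 1, by omega⟩
    have hqv : q (m + 1) = dpPMF ν (m + 1) := by
      rw [hqpow m, hq1v]
      simp only [dpPMF]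
      push_cast
      ring
    have hfinal : (P (X ⁻¹' {m + 1})).toReal = dpPMF ν (m + 1) := hqv
    rw [← hfinal, ENNReal.ofReal_toReal (measure_ne_top P _)]
end

section
/- Let X be a random variable taking values in ℕ = {1,2,3,...} whose distribution is not a member of the discrete Pareto family 𝒫 = { DPareto(ν) : ν > 1 }. Then for every ν > 1, the departure measure Δ_ν = ∫_0^1 ( E[ g_ν(X,s) ] )^2 ds is strictly positive. -/
open MeasureTheory Real Filter Set Topology

lemma tail_abs_le (a : ℕ → ℝ) (ha : Summable (fun n => |a n|)) (k : ℕ) :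
    ∑' m, |a (m + k)| ≤ ∑' m, |a m| := by
  have h := Summable.sum_add_tsum_nat_add (f := fun m => |a m|) k ha
  have h2 : (0:ℝ) ≤ ∑ i ∈ Finset.range k, |a i| := Finset.sum_nonneg fun i _ => abs_nonneg _
  linarith

lemma coeff_zero (a : ℕ → ℝ) (ha : Summable (fun n => |a n|))
    (h : ∀ s ∈ Ioo (0:ℝ) 1, ∑' n, a n * s ^ n = 0) : ∀ n, a n = 0 := by
  intro n
  induction n using Nat.strong_induction_on with
  | _ n IH =>
  set C : ℝ := ∑' m, |a m| with hC
  have hCnn : 0 ≤ C := tsum_nonneg fun m => abs_nonneg _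
  have key : ∀ s ∈ Ioo (0:ℝ) 1, |a n| ≤ s * C := by
    intro s hs
    obtain ⟨hs0, hs1⟩ := hs
    have hpow : ∀ m : ℕ, |s ^ m| ≤ 1 := fun m => by
      rw [abs_pow, abs_of_pos hs0]; exact pow_le_one₀ hs0.le hs1.le
    have hsum : Summable (fun m => a m * s ^ m) := by
      apply Summable.of_norm_bounded ha
      intro m
      rw [norm_mul, Real.norm_eq_abs, Real.norm_eq_abs]
      calc |a m| * |s ^ m| ≤ |a m| * 1 := mul_le_mul_of_nonneg_left (hpow m) (abs_nonneg _)
        _ = |a m| := mul_one _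
    have hatail : ∀ k : ℕ, Summable (fun m => |a (m + k)|) := fun k =>
      (summable_nat_add_iff k).mpr ha
    have hsumshift : ∀ k : ℕ, Summable (fun m => a (m + k) * s ^ m) := by
      intro k
      apply Summable.of_norm_bounded (hatail k)
      intro m
      rw [norm_mul, Real.norm_eq_abs, Real.norm_eq_abs]
      calc |a (m+k)| * |s ^ m| ≤ |a (m+k)| * 1 := mul_le_mul_of_nonneg_left (hpow m) (abs_nonneg _)
        _ = |a (m+k)| := mul_one _
    have htail : ∑' m, a (m + n) * s ^ (m + n) = 0 := by
      have h0 := Summable.sum_add_tsum_nat_add (f := fun m => a m * s ^ m) n hsum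
      have hzero : ∑ i ∈ Finset.range n, a i * s ^ i = 0 :=
        Finset.sum_eq_zero fun i hi => by rw [IH i (Finset.mem_range.mp hi), zero_mul]
      rw [hzero, zero_add] at h0
      rw [h0, h s ⟨hs0, hs1⟩]
    have hT : ∑' m, a (m + n) * s ^ m = 0 := by
      have hfact : ∑' m, a (m + n) * s ^ (m + n) = s ^ n * ∑' m, a (m + n) * s ^ m := by
        rw [← tsum_mul_left]; congr 1; ext m; ring
      rw [hfact] at htail
      exact (mul_eq_zero.mp htail).resolve_left (ne_of_gt (pow_pos hs0 n))
    have hsum1 : Summable (fun m => a (m + 1 + n) * s ^ (m + 1)) := by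
      apply Summable.of_norm_bounded (g := fun m => |a (m + (1 + n))|) (hatail (1 + n))
      intro m
      rw [norm_mul, Real.norm_eq_abs, Real.norm_eq_abs, Nat.add_assoc]
      calc |a (m+(1+n))| * |s ^ (m+1)| ≤ |a (m+(1+n))| * 1 :=
            mul_le_mul_of_nonneg_left (hpow (m+1)) (abs_nonneg _)
        _ = |a (m+(1+n))| := mul_one _
    have hsplit : a n + ∑' m, a (m + 1 + n) * s ^ (m + 1) = 0 := by
      have h2 := Summable.tsum_eq_zero_add (hsumshift n)
      simp only [zero_add, pow_zero, mul_one] at h2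
      rw [hT] at h2
      linarith [h2]
    have hbound : |∑' m, a (m + 1 + n) * s ^ (m + 1)| ≤ s * C := by
      have h6 := norm_tsum_le_tsum_norm (f := fun m => a (m + 1 + n) * s ^ (m + 1))
        hsum1.norm
      rw [Real.norm_eq_abs] at h6
      refine le_trans h6 ?_
      have step : ∀ m : ℕ, ‖a (m + 1 + n) * s ^ (m + 1)‖ ≤ s * |a (m + (1 + n))| := by
        intro m
        rw [norm_mul, Real.norm_eq_abs, Real.norm_eq_abs, abs_pow, abs_of_pos hs0, Nat.add_assoc]
        calc |a (m+(1+n))| * s ^ (m+1) ≤ |a (m+(1+n))| * s := by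
              apply mul_le_mul_of_nonneg_left _ (abs_nonneg _)
              calc s ^ (m+1) ≤ s ^ 1 := pow_le_pow_of_le_one hs0.le hs1.le (by omega)
                _ = s := pow_one s
          _ = s * |a (m+(1+n))| := mul_comm _ _
      calc ∑' m, ‖a (m + 1 + n) * s ^ (m + 1)‖ ≤ ∑' m, s * |a (m + (1 + n))| := by
            apply Summable.tsum_le_tsum step
            · exact hsum1.norm
            · exact (hatail (1 + n)).mul_left s
        _ = s * ∑' m, |a (m + (1 + n))| := tsum_mul_left
        _ ≤ s * C := mul_le_mul_of_nonneg_left (tail_abs_le a ha (1 + n)) hs0.le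
    have h7 : a n = -∑' m, a (m + 1 + n) * s ^ (m + 1) := by linarith
    rw [h7, abs_neg]
    exact hbound
  by_contra hne
  have hpos : 0 < |a n| := abs_pos.mpr hne
  set s := min (1/2) (|a n| / (2 * (C + 1))) with hsdef
  have hs0 : 0 < s := lt_min (by norm_num) (div_pos hpos (by linarith))
  have hs1 : s < 1 := lt_of_le_of_lt (min_le_left _ _) (by norm_num)
  have hk := key s ⟨hs0, hs1⟩
  have hle : s ≤ |a n| / (2 * (C + 1)) := min_le_right _ _
  have h8 : |a n| ≤ (|a n| / (2 * (C + 1))) * C :=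
    le_trans hk (mul_le_mul_of_nonneg_right hle hCnn)
  have hCC : (|a n| / (2 * (C + 1))) * C < |a n| := by
    rw [div_mul_eq_mul_div, div_lt_iff₀ (by linarith : (0:ℝ) < 2 * (C+1))]
    nlinarith
  linarith

lemma c_mem {ν : ℝ} (hν : 0 ≤ ν) (k : ℕ) : ((k:ℝ)/((k:ℝ)+1))^ν ∈ Icc (0:ℝ) 1 := by
  have h0 : (0:ℝ) ≤ (k:ℝ)/((k:ℝ)+1) := div_nonneg (Nat.cast_nonneg k) (by positivity)
  refine ⟨rpow_nonneg h0 ν, rpow_le_one h0 ?_ hν⟩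
  rw [div_le_one (by positivity)]
  linarith

lemma g_abs_le {ν : ℝ} (hν : 0 ≤ ν) (k : ℕ) {s : ℝ} (hs : s ∈ Icc (0:ℝ) 1) : |g ν k s| ≤ 2 := by
  obtain ⟨hs0, hs1⟩ := hs
  have hu : s ^ (k - 1) ∈ Icc (0:ℝ) 1 := ⟨pow_nonneg hs0 _, pow_le_one₀ hs0 hs1⟩
  have hv : s ^ k ∈ Icc (0:ℝ) 1 := ⟨pow_nonneg hs0 _, pow_le_one₀ hs0 hs1⟩
  have hc := c_mem hν k
  obtain ⟨hu0, hu1⟩ := hu; obtain ⟨hv0, hv1⟩ := hv; obtain ⟨hc0, hc1⟩ := hc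
  rw [g, abs_le]
  exact ⟨by nlinarith, by nlinarith⟩

lemma g_continuous (ν : ℝ) (k : ℕ) : Continuous (fun s : ℝ => g ν k s) := by
  unfold g; fun_prop

theorem departure_measure_pos
    {Ω : Type*} [MeasurableSpace Ω] (P : Measure Ω) [IsProbabilityMeasure P]
    (X : Ω → ℕ) (hXm : Measurable X) (hX1 : ∀ ω, 1 ≤ X ω)
    (hnot : ¬ ∃ ν : ℝ, 1 < ν ∧ IsDPareto P X ν) :
    ∀ ν : ℝ, 1 < ν → 0 < ∫ s in (0:ℝ)..1, (∫ ω, g ν (X ω) s ∂P) ^ 2 := by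
  intro ν hν
  have hν0 : (0:ℝ) ≤ ν := by linarith
  set μ : Measure ℕ := P.map X with hμ
  haveI : IsProbabilityMeasure μ := Measure.isProbabilityMeasure_map hXm.aemeasurable
  set q : ℕ → ℝ := fun k => (μ {k}).toReal with hqdef
  have hμfin : ∀ k : ℕ, μ {k} ≠ ⊤ := fun k => measure_ne_top μ _
  have hμtot : ∑' k : ℕ, μ {k} = 1 := by
    have h1 : μ (⋃ k : ℕ, {k}) = ∑' k : ℕ, μ {k} :=
      measure_iUnion (fun i j hij => by simp [Function.onFun, hij])
        (fun i => measurableSet_singleton i)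
    rw [← h1, Set.iUnion_of_singleton, measure_univ]
  have hqsum : Summable q := ENNReal.summable_toReal (by rw [hμtot]; exact ENNReal.one_ne_top)
  have hqtot : ∑' k, q k = 1 := by
    have := ENNReal.tsum_toReal_eq hμfin
    rw [hμtot] at this
    simpa using this.symm
  have hqnn : ∀ k, 0 ≤ q k := fun k => ENNReal.toReal_nonneg
  have hq0 : q 0 = 0 := by
    have hpre : X ⁻¹' ({0} : Set ℕ) = ∅ := by
      ext ω; simp only [mem_preimage, mem_singleton_iff, mem_empty_iff_false, iff_false]
      have := hX1 ω; omega
    simp [hqdef, hμ, Measure.map_apply hXm (measurableSet_singleton 0), hpre]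
  set c : ℕ → ℝ := fun k => ((k:ℝ)/((k:ℝ)+1))^ν with hcdef
  have hc01 : ∀ k, c k ∈ Icc (0:ℝ) 1 := fun k => c_mem hν0 k
  set G : ℝ → ℝ := fun s => ∑' k, q k * g ν k s with hGdef
  have hgmeas : ∀ s : ℝ, Measurable (fun k : ℕ => g ν k s) := fun s => measurable_from_top
  have hgint : ∀ s ∈ Icc (0:ℝ) 1, Integrable (fun k : ℕ => g ν k s) μ := by
    intro s hs
    refine (integrable_const (2:ℝ)).mono' (hgmeas s).aestronglyMeasurable ?_
    exact Filter.Eventually.of_forall fun k => by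
      rw [Real.norm_eq_abs]; exact g_abs_le hν0 k hs
  have hFG : ∀ s ∈ Icc (0:ℝ) 1, (∫ ω, g ν (X ω) s ∂P) = G s := by
    intro s hs
    have h1 : ∫ ω, g ν (X ω) s ∂P = ∫ k, g ν k s ∂μ :=
      (integral_map hXm.aemeasurable (hgmeas s).aestronglyMeasurable).symm
    rw [h1, integral_countable' (hgint s hs)]
    simp [hqdef, smul_eq_mul]
    rfl
  have hGcont : ContinuousOn G (Icc (0:ℝ) 1) := by
    apply TendstoUniformlyOn.continuousOn
      (tendstoUniformlyOn_tsum (hqsum.mul_left 2) (f := fun k s => q k * g ν k s)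
        (s := Icc (0:ℝ) 1) ?_)
    · exact Filter.Frequently.of_forall fun t =>
        (continuous_finset_sum t fun k _ => (continuous_const.mul (g_continuous ν k))).continuousOn
    · intro k s hs
      rw [Real.norm_eq_abs, abs_mul, abs_of_nonneg (hqnn k)]
      calc q k * |g ν k s| ≤ q k * 2 := mul_le_mul_of_nonneg_left (g_abs_le hν0 k hs) (hqnn k)
        _ = 2 * q k := mul_comm _ _
  -- existence of a point where G ≠ 0
  have hexists : ∃ s₀ ∈ Ioo (0:ℝ) 1, G s₀ ≠ 0 := by
    by_contra hcon
    push_neg at hcon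
    apply hnot
    refine ⟨ν, hν, ?_⟩
    -- setup coefficients
    have hqc_abs : ∀ k, |q k * c k| ≤ q k := by
      intro k
      rw [abs_mul, abs_of_nonneg (hqnn k), abs_of_nonneg (hc01 k).1]
      calc q k * c k ≤ q k * 1 := mul_le_mul_of_nonneg_left (hc01 k).2 (hqnn k)
        _ = q k := mul_one _
    have hqcsum : Summable (fun k => q k * c k) := by
      apply Summable.of_norm_bounded hqsum
      intro k; rw [Real.norm_eq_abs]; exact hqc_abs k
    set T : ℝ := ∑' k, q k * c k with hTdef
    set a : ℕ → ℝ := fun m => q (m+1) - q m * c m + (if m = 0 then T - 1 else 0) with hadef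
    have hq1sum : Summable (fun m => q (m+1)) := (summable_nat_add_iff 1).mpr hqsum
    have hitesum : Summable (fun m : ℕ => if m = 0 then |T - 1| else 0) := by
      apply summable_of_ne_finset_zero (s := {0})
      intro m hm
      simp only [Finset.mem_singleton] at hm
      simp [hm]
    have haabs : Summable (fun m => |a m|) := by
      apply Summable.of_norm_bounded
        (g := fun m => q (m+1) + q m + (if m = 0 then |T - 1| else 0))
        ((hq1sum.add hqsum).add hitesum)
      · intro m
        rw [Real.norm_eq_abs, abs_abs]
        simp only [hadef]
        have htri : |q (m+1) - q m * c m + (if m = 0 then T - 1 else 0)|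
            ≤ |q (m+1)| + |q m * c m| + |(if m = 0 then T - 1 else 0)| := by
          rw [sub_eq_add_neg]
          calc |q (m+1) + -(q m * c m) + (if m = 0 then T - 1 else 0)|
              ≤ |q (m+1) + -(q m * c m)| + |(if m = 0 then T - 1 else 0)| := abs_add_le _ _
            _ ≤ |q (m+1)| + |-(q m * c m)| + |(if m = 0 then T - 1 else 0)| :=
                add_le_add_left (abs_add_le _ _) _
            _ = |q (m+1)| + |q m * c m| + |(if m = 0 then T - 1 else 0)| := by rw [abs_neg]
        refine le_trans htri ?_
        have h1 : |q (m+1)| = q (m+1) := abs_of_nonneg (hqnn _)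
        have h2 : |q m * c m| ≤ q m := hqc_abs m
        have h3 : |(if m = 0 then T - 1 else 0)| = (if m = 0 then |T - 1| else 0) := by
          by_cases hm : m = 0 <;> simp [hm]
        rw [h1, h3]
        linarith
    -- the power series identity
    have hkey : ∀ s ∈ Ioo (0:ℝ) 1, ∑' m, a m * s ^ m = 0 := by
      intro s hs
      have hsIcc : s ∈ Icc (0:ℝ) 1 := ⟨hs.1.le, hs.2.le⟩
      have hspow : ∀ m : ℕ, |s ^ m| ≤ 1 := fun m => by
        rw [abs_pow, abs_of_pos hs.1]; exact pow_le_one₀ hs.1.le hs.2.le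
      -- summabilities
      have hS1 : Summable (fun k => q k * s ^ (k - 1)) := by
        apply Summable.of_norm_bounded hqsum
        intro k
        rw [Real.norm_eq_abs, abs_mul, abs_of_nonneg (hqnn k)]
        calc q k * |s ^ (k-1)| ≤ q k * 1 := mul_le_mul_of_nonneg_left (hspow _) (hqnn k)
          _ = q k := mul_one _
      have hS2 : Summable (fun k => q k * (c k - 1)) := by
        apply Summable.of_norm_bounded hqsum
        intro k
        rw [Real.norm_eq_abs, abs_mul, abs_of_nonneg (hqnn k)]
        have : |c k - 1| ≤ 1 := by
          rw [abs_le]; constructor <;> [linarith [(hc01 k).1]; linarith [(hc01 k).2]]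
        calc q k * |c k - 1| ≤ q k * 1 := mul_le_mul_of_nonneg_left this (hqnn k)
          _ = q k := mul_one _
      have hS3 : Summable (fun k => q k * c k * s ^ k) := by
        apply Summable.of_norm_bounded hqsum
        intro k
        rw [Real.norm_eq_abs, abs_mul]
        calc |q k * c k| * |s ^ k| ≤ |q k * c k| * 1 :=
              mul_le_mul_of_nonneg_left (hspow _) (abs_nonneg _)
          _ = |q k * c k| := mul_one _
          _ ≤ q k := hqc_abs k
      have hA : Summable (fun m => q (m+1) * s ^ m) := by
        apply Summable.of_norm_bounded hq1sum
        intro m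
        rw [Real.norm_eq_abs, abs_mul, abs_of_nonneg (hqnn _)]
        calc q (m+1) * |s ^ m| ≤ q (m+1) * 1 := mul_le_mul_of_nonneg_left (hspow _) (hqnn _)
          _ = q (m+1) := mul_one _
      have hIte : Summable (fun m : ℕ => (if m = 0 then T - 1 else 0) * s ^ m) := by
        apply summable_of_ne_finset_zero (s := {0})
        intro m hm
        simp only [Finset.mem_singleton] at hm
        simp [hm]
      -- G s expansion
      have hGexp : G s = (∑' k, q k * s ^ (k - 1)) + (∑' k, q k * (c k - 1))
          - ∑' k, q k * c k * s ^ k := by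
        simp only [hGdef]
        rw [← Summable.tsum_add hS1 hS2, ← Summable.tsum_sub (hS1.add hS2) hS3]
        congr 1; ext k
        rw [g, hcdef]; ring
      have hA_eq : ∑' k, q k * s ^ (k - 1) = ∑' m, q (m+1) * s ^ m := by
        rw [Summable.tsum_eq_zero_add hS1]
        simp [hq0]
      have hB_eq : ∑' k, q k * (c k - 1) = T - 1 := by
        have : ∀ k, q k * (c k - 1) = q k * c k - q k := fun k => by ring
        rw [tsum_congr this, Summable.tsum_sub hqcsum hqsum, hqtot]
      have hIte_eq : ∑' m : ℕ, (if m = 0 then T - 1 else 0) * s ^ m = T - 1 := by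
        have : ∀ m : ℕ, (if m = 0 then T - 1 else 0) * s ^ m = (if m = 0 then T - 1 else 0) := by
          intro m; by_cases hm : m = 0 <;> simp [hm]
        rw [tsum_congr this]; exact tsum_ite_eq 0 (fun _ => T - 1)
      -- combine
      have hsplit : ∑' m, a m * s ^ m
          = (∑' m, q (m+1) * s ^ m) - (∑' m, q m * c m * s ^ m)
            + ∑' m : ℕ, (if m = 0 then T - 1 else 0) * s ^ m := by
        rw [← Summable.tsum_sub hA hS3, ← Summable.tsum_add (hA.sub hS3) hIte]
        congr 1; ext m
        simp only [hadef]; ring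
      rw [hsplit, hIte_eq, ← hA_eq]
      have hG0 := hcon s hs
      rw [hGexp, hB_eq] at hG0
      linarith
    have hcoeff := coeff_zero a haabs hkey
    -- recursion
    have hrec : ∀ m : ℕ, 1 ≤ m → q (m + 1) = q m * c m := by
      intro m hm
      have hm0 : m ≠ 0 := by omega
      have hcm := hcoeff m
      simp only [hadef, hm0, if_false, add_zero] at hcm
      linarith
    have hform : ∀ k : ℕ, 1 ≤ k → q k = q 1 * (k:ℝ) ^ (-ν) := by
      intro k hk
      induction k, hk using Nat.le_induction with
      | base => simp [Real.one_rpow]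
      | succ k hk IH =>
        have hk0 : (0:ℝ) < (k:ℝ) := by exact_mod_cast hk
        have hk10 : (0:ℝ) < (k:ℝ) + 1 := by linarith
        rw [hrec k hk, IH, hcdef]
        push_cast
        rw [div_rpow hk0.le hk10.le, Real.rpow_neg hk0.le, Real.rpow_neg hk10.le]
        have h1 : ((k:ℝ)) ^ ν ≠ 0 := ne_of_gt (rpow_pos_of_pos hk0 ν)
        have h2 : ((k:ℝ) + 1) ^ ν ≠ 0 := ne_of_gt (rpow_pos_of_pos hk10 ν)
        field_simp
    -- zeta facts
    have hzsum : Summable (fun m : ℕ => ((m:ℝ) + 1) ^ (-ν)) := by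
      have h1 : Summable (fun n : ℕ => (n:ℝ) ^ (-ν)) := summable_nat_rpow.mpr (by linarith)
      have h2 := (summable_nat_add_iff 1).mpr h1
      apply h2.congr
      intro m
      push_cast
      ring_nf
    have hzpos : 0 < zetaR ν := by
      have h0 : (0:ℝ) < (((0:ℕ):ℝ) + 1) ^ (-ν) := by positivity
      have := Summable.tsum_pos hzsum (fun m => rpow_nonneg (by positivity) _) 0 h0
      rw [zetaR]
      exact this
    have h1z : q 1 * zetaR ν = 1 := by
      have h1 : (1:ℝ) = ∑' k, q k := hqtot.symm
      rw [Summable.tsum_eq_zero_add hqsum, hq0, zero_add] at h1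
      have h2 : ∀ m : ℕ, q (m + 1) = q 1 * ((m:ℝ) + 1) ^ (-ν) := by
        intro m
        have := hform (m+1) (by omega)
        push_cast at this
        exact this
      rw [tsum_congr h2, tsum_mul_left] at h1
      rw [zetaR]
      linarith
    have hq1 : q 1 = 1 / zetaR ν := by
      field_simp at h1z ⊢
      linarith
    intro k hk
    have hqk : q k = dpPMF ν k := by
      rw [hform k hk, hq1, dpPMF]
      ring
    have hμk : μ {k} = P (X ⁻¹' {k}) := Measure.map_apply hXm (measurableSet_singleton k)
    rw [← hμk, ← ENNReal.ofReal_toReal (hμfin k)]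
    rw [show (μ {k}).toReal = q k from rfl, hqk]
  -- positivity
  obtain ⟨s₀, hs₀, hGne⟩ := hexists
  rw [intervalIntegral.integral_of_le zero_le_one]
  have hcongr : ∫ s in Ioc (0:ℝ) 1, (∫ ω, g ν (X ω) s ∂P) ^ 2
      = ∫ s in Ioc (0:ℝ) 1, (G s) ^ 2 :=
    setIntegral_congr_fun measurableSet_Ioc (fun s hs => by rw [hFG s (Ioc_subset_Icc_self hs)])
  rw [hcongr]
  have hG2cont : ContinuousOn (fun s => (G s) ^ 2) (Icc (0:ℝ) 1) := hGcont.pow 2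
  have hint : IntegrableOn (fun s => (G s) ^ 2) (Ioc (0:ℝ) 1) volume :=
    (hG2cont.integrableOn_Icc).mono_set Ioc_subset_Icc_self
  rw [setIntegral_pos_iff_support_of_nonneg_ae
    (Filter.Eventually.of_forall (fun s => sq_nonneg (G s))) hint]
  have hca : ContinuousAt G s₀ := hGcont.continuousAt (Icc_mem_nhds hs₀.1 hs₀.2)
  have hev : {s : ℝ | G s ≠ 0} ∈ 𝓝 s₀ := hca.eventually_ne hGne
  have hU : {s : ℝ | G s ≠ 0} ∩ Ioo 0 1 ∈ 𝓝 s₀ := inter_mem hev (Ioo_mem_nhds hs₀.1 hs₀.2)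
  obtain ⟨V, hVsub, hVopen, hV₀⟩ := mem_nhds_iff.mp hU
  have hVpos : 0 < volume V := hVopen.measure_pos volume ⟨s₀, hV₀⟩
  refine lt_of_lt_of_le hVpos (measure_mono ?_)
  intro x hx
  obtain ⟨hx1, hx2⟩ := hVsub hx
  exact ⟨pow_ne_zero 2 hx1, Ioo_subset_Ioc_self hx2⟩
end

section
/- Let ν > 1 and x, y ∈ ℕ = {1,2,3,...}. Then ∫_0^1 g_ν(x,s) g_ν(y,s) ds = 1/(x+y-1) - (1/x + 1/y) + (x/(x+1))^{ν+1} ( (x+1)/(y(y+x)) - 1 ) + (y/(y+1))^{ν+1} ( (y+1)/(x(y+x)) - 1 ) + (x/(x+1))^{ν+1} (y/(y+1))^{ν+1} · (x+y+2)/(x+y+1) + 1. -/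
open MeasureTheory Real Filter Set

private lemma mono_int (c : ℝ) (k : ℕ) :
    ∫ s in (0:ℝ)..1, c * s ^ k = c / ((k : ℝ) + 1) := by
  rw [intervalIntegral.integral_const_mul, integral_pow]
  simp [div_eq_mul_inv]

private lemma mono_ii (c : ℝ) (k : ℕ) :
    IntervalIntegrable (fun s : ℝ => c * s ^ k) volume 0 1 :=
  ((continuous_const.mul (continuous_pow k)).intervalIntegrable 0 1)

private lemma sum8 (c1 c2 c3 c4 c5 c6 c7 c8 : ℝ) (k1 k2 k3 k4 k5 k6 k7 k8 : ℕ) :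
    ∫ s in (0:ℝ)..1,
      (c1 * s ^ k1 + c2 * s ^ k2 + c3 * s ^ k3 + c4 * s ^ k4 + c5 * s ^ k5
        + c6 * s ^ k6 + c7 * s ^ k7 + c8 * s ^ k8)
    = c1 / ((k1 : ℝ) + 1) + c2 / ((k2 : ℝ) + 1) + c3 / ((k3 : ℝ) + 1) + c4 / ((k4 : ℝ) + 1)
      + c5 / ((k5 : ℝ) + 1) + c6 / ((k6 : ℝ) + 1) + c7 / ((k7 : ℝ) + 1)
      + c8 / ((k8 : ℝ) + 1) := by
  rw [intervalIntegral.integral_add (((((((mono_ii c1 k1).add (mono_ii c2 k2)).add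
        (mono_ii c3 k3)).add (mono_ii c4 k4)).add (mono_ii c5 k5)).add (mono_ii c6 k6)).add
        (mono_ii c7 k7)) (mono_ii c8 k8),
      intervalIntegral.integral_add ((((((mono_ii c1 k1).add (mono_ii c2 k2)).add
        (mono_ii c3 k3)).add (mono_ii c4 k4)).add (mono_ii c5 k5)).add (mono_ii c6 k6))
        (mono_ii c7 k7),
      intervalIntegral.integral_add (((((mono_ii c1 k1).add (mono_ii c2 k2)).add
        (mono_ii c3 k3)).add (mono_ii c4 k4)).add (mono_ii c5 k5)) (mono_ii c6 k6),
      intervalIntegral.integral_add ((((mono_ii c1 k1).add (mono_ii c2 k2)).add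
        (mono_ii c3 k3)).add (mono_ii c4 k4)) (mono_ii c5 k5),
      intervalIntegral.integral_add (((mono_ii c1 k1).add (mono_ii c2 k2)).add
        (mono_ii c3 k3)) (mono_ii c4 k4),
      intervalIntegral.integral_add ((mono_ii c1 k1).add (mono_ii c2 k2)) (mono_ii c3 k3),
      intervalIntegral.integral_add (mono_ii c1 k1) (mono_ii c2 k2),
      mono_int, mono_int, mono_int, mono_int, mono_int, mono_int, mono_int, mono_int]

set_option maxHeartbeats 1000000 in
theorem hker_formula (ν : ℝ) (hν : 1 < ν) (x y : ℕ) (hx : 1 ≤ x) (hy : 1 ≤ y) :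
    hker ν x y =
      1 / ((x : ℝ) + (y : ℝ) - 1) - (1 / (x : ℝ) + 1 / (y : ℝ))
      + ((x : ℝ) / ((x : ℝ) + 1)) ^ (ν + 1) *
          (((x : ℝ) + 1) / ((y : ℝ) * ((y : ℝ) + (x : ℝ))) - 1)
      + ((y : ℝ) / ((y : ℝ) + 1)) ^ (ν + 1) *
          (((y : ℝ) + 1) / ((x : ℝ) * ((y : ℝ) + (x : ℝ))) - 1)
      + ((x : ℝ) / ((x : ℝ) + 1)) ^ (ν + 1) * ((y : ℝ) / ((y : ℝ) + 1)) ^ (ν + 1) *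
          (((x : ℝ) + (y : ℝ) + 2) / ((x : ℝ) + (y : ℝ) + 1))
      + 1 := by
  obtain ⟨m, rfl⟩ : ∃ m, x = m + 1 := ⟨x - 1, by omega⟩
  obtain ⟨n, rfl⟩ : ∃ n, y = n + 1 := ⟨y - 1, by omega⟩
  have hxpos : (0:ℝ) < ((m + 1 : ℕ) : ℝ) / (((m + 1 : ℕ) : ℝ) + 1) := by positivity
  have hypos : (0:ℝ) < ((n + 1 : ℕ) : ℝ) / (((n + 1 : ℕ) : ℝ) + 1) := by positivity
  set A : ℝ := (((m + 1 : ℕ) : ℝ) / (((m + 1 : ℕ) : ℝ) + 1)) ^ ν with hA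
  set B : ℝ := (((n + 1 : ℕ) : ℝ) / (((n + 1 : ℕ) : ℝ) + 1)) ^ ν with hB
  have key : hker ν (m + 1) (n + 1) =
      ∫ s in (0:ℝ)..1,
        ((1 : ℝ) * s ^ (m + n) + (B - 1) * s ^ m + (A - 1) * s ^ n
          + ((1 - A) * (1 - B)) * s ^ 0 + (A - A * B) * s ^ (m + 1)
          + (B - A * B) * s ^ (n + 1) + (-(A + B)) * s ^ (m + n + 1)
          + (A * B) * s ^ (m + n + 2)) := by
    unfold hker g
    congr 1
    funext s
    simp only [Nat.add_sub_cancel, ← hA, ← hB]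
    ring
  rw [key, sum8]
  have hrw : ∀ z : ℕ, ((((z+1):ℕ) : ℝ) / ((((z+1):ℕ) : ℝ) + 1)) ^ (ν + 1)
      = ((((z+1):ℕ) : ℝ) / ((((z+1):ℕ) : ℝ) + 1)) ^ ν
        * ((((z+1):ℕ) : ℝ) / ((((z+1):ℕ) : ℝ) + 1)) := by
    intro z
    rw [Real.rpow_add (by positivity), Real.rpow_one]
  rw [hrw m, hrw n, ← hA, ← hB]
  push_cast
  have h1 : ((m:ℝ) + 1) ≠ 0 := by positivity
  have h2 : ((n:ℝ) + 1) ≠ 0 := by positivity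
  have h3 : ((m:ℝ) + 2) ≠ 0 := by positivity
  have h4 : ((n:ℝ) + 2) ≠ 0 := by positivity
  have h5 : ((m:ℝ) + (n:ℝ) + 1) ≠ 0 := by positivity
  have h6 : ((m:ℝ) + (n:ℝ) + 2) ≠ 0 := by positivity
  have h7 : ((m:ℝ) + (n:ℝ) + 3) ≠ 0 := by positivity
  have e1 : ((m:ℝ) + 1 + ((n:ℝ) + 1) - 1) = (m:ℝ) + (n:ℝ) + 1 := by ring
  have e2 : ((m:ℝ) + 1 + 1) = (m:ℝ) + 2 := by ring
  have e3 : ((n:ℝ) + 1 + 1) = (n:ℝ) + 2 := by ring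
  have e4 : ((n:ℝ) + 1 + ((m:ℝ) + 1)) = (m:ℝ) + (n:ℝ) + 2 := by ring
  have e5 : ((m:ℝ) + 1 + ((n:ℝ) + 1) + 1) = (m:ℝ) + (n:ℝ) + 3 := by ring
  have e6 : ((m:ℝ) + 1 + ((n:ℝ) + 1) + 2) = (m:ℝ) + (n:ℝ) + 4 := by ring
  have e7 : ((m:ℝ) + (n:ℝ) + 1 + 1) = (m:ℝ) + (n:ℝ) + 2 := by ring
  have e8 : ((m:ℝ) + (n:ℝ) + 2 + 1) = (m:ℝ) + (n:ℝ) + 3 := by ring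
  rw [e1, e2, e3, e4, e5, e6, e7, e8]
  field_simp
  ring
end

section
/- Let ν̂ > 1, n ∈ ℕ, and x_1, …, x_n ∈ ℕ = {1,2,3,...}. Then n · ∫_0^1 ( (1/n) Σ_{j=1}^n g_{ν̂}(x_j, s) )^2 ds = n + (1/n) Σ_{i,j=1}^n [ 1/(x_i + x_j - 1) - (1/x_i + 1/x_j) + 2 (x_i/(x_i+1))^{ν̂+1} ( (x_i+1)/(x_j(x_j+x_i)) - 1 ) + (x_i/(x_i+1))^{ν̂+1} (x_j/(x_j+1))^{ν̂+1} · (x_i+x_j+2)/(x_i+x_j+1) ]. -/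
open MeasureTheory Real Filter Set

noncomputable def Aaux (ν : ℝ) (x : ℕ) : ℝ := ((x:ℝ) / ((x:ℝ)+1)) ^ (ν+1)

noncomputable def Caux (ν : ℝ) (x y : ℕ) : ℝ :=
  Aaux ν x * (((x:ℝ)+1)/((y:ℝ)*((y:ℝ)+(x:ℝ))) - 1)

noncomputable def braux (ν : ℝ) (x y : ℕ) : ℝ :=
  1/((x:ℝ)+(y:ℝ)-1) - (1/(x:ℝ) + 1/(y:ℝ)) + 2 * Caux ν x y
    + Aaux ν x * Aaux ν y * (((x:ℝ)+(y:ℝ)+2)/((x:ℝ)+(y:ℝ)+1))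

lemma int4 (d e : ℕ) : ∫ s in (0:ℝ)..1, (s^d - 1)*(s^e - 1)
    = 1/((d:ℝ)+(e:ℝ)+1) - 1/((d:ℝ)+1) - 1/((e:ℝ)+1) + 1 := by
  have h : ∀ s:ℝ, (s^d - 1)*(s^e - 1) = s^(d+e) - s^d - s^e + 1 := by
    intro s; rw [pow_add]; ring
  have hI : ∀ f : ℝ → ℝ, Continuous f → IntervalIntegrable f volume 0 1 :=
    fun f hf => hf.intervalIntegrable 0 1
  simp only [h]
  rw [intervalIntegral.integral_add (hI _ (by fun_prop)) (hI _ (by fun_prop)),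
      intervalIntegral.integral_sub (hI _ (by fun_prop)) (hI _ (by fun_prop)),
      intervalIntegral.integral_sub (hI _ (by fun_prop)) (hI _ (by fun_prop)),
      integral_pow, integral_pow, integral_pow, intervalIntegral.integral_const]
  push_cast
  norm_num

lemma key_int (a b : ℕ) (c₁ c₂ : ℝ) :
    ∫ s in (0:ℝ)..1, ((s^a - 1) + c₁*(1 - s^(a+1))) * ((s^b - 1) + c₂*(1 - s^(b+1))) =
      (1/((a:ℝ)+(b:ℝ)+1) - 1/((a:ℝ)+1) - 1/((b:ℝ)+1) + 1)
      - c₂ * (1/((a:ℝ)+(b:ℝ)+2) - 1/((a:ℝ)+1) - 1/((b:ℝ)+2) + 1)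
      - c₁ * (1/((a:ℝ)+(b:ℝ)+2) - 1/((a:ℝ)+2) - 1/((b:ℝ)+1) + 1)
      + c₁*c₂*(1/((a:ℝ)+(b:ℝ)+3) - 1/((a:ℝ)+2) - 1/((b:ℝ)+2) + 1) := by
  have h : ∀ s:ℝ, ((s^a - 1) + c₁*(1 - s^(a+1))) * ((s^b - 1) + c₂*(1 - s^(b+1)))
      = (s^a - 1)*(s^b - 1) - c₂ * ((s^a - 1)*(s^(b+1) - 1))
        - c₁ * ((s^(a+1) - 1)*(s^b - 1)) + c₁*c₂*((s^(a+1) - 1)*(s^(b+1) - 1)) := by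
    intro s; ring
  have hI : ∀ f : ℝ → ℝ, Continuous f → IntervalIntegrable f volume 0 1 :=
    fun f hf => hf.intervalIntegrable 0 1
  simp only [h]
  rw [intervalIntegral.integral_add (hI _ (by fun_prop)) (hI _ (by fun_prop)),
      intervalIntegral.integral_sub (hI _ (by fun_prop)) (hI _ (by fun_prop)),
      intervalIntegral.integral_sub (hI _ (by fun_prop)) (hI _ (by fun_prop)),
      intervalIntegral.integral_const_mul, intervalIntegral.integral_const_mul,
      intervalIntegral.integral_const_mul,
      int4, int4, int4, int4]
  push_cast
  ring

lemma final_alg (X Y c₁ c₂ : ℝ) (hX : 0 < X) (hY : 0 < Y) :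
    (1/(X+Y-1) - 1/X - 1/Y + 1)
      - c₂ * (1/(X+Y) - 1/X - 1/(Y+1) + 1)
      - c₁ * (1/(X+Y) - 1/(X+1) - 1/Y + 1)
      + c₁*c₂*(1/(X+Y+1) - 1/(X+1) - 1/(Y+1) + 1)
    = 1 + (1/(X+Y-1) - (1/X + 1/Y)
        + 2 * (c₁ * (X/(X+1)) * ((X+1)/(Y*(Y+X)) - 1))
        + (c₁ * (X/(X+1))) * (c₂ * (Y/(Y+1))) * ((X+Y+2)/(X+Y+1)))
      + ((c₂ * (Y/(Y+1))) * ((Y+1)/(X*(X+Y)) - 1)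
          - c₁ * (X/(X+1)) * ((X+1)/(Y*(Y+X)) - 1)) := by
  have h1 : X ≠ 0 := hX.ne'
  have h2 : Y ≠ 0 := hY.ne'
  have h3 : X + 1 ≠ 0 := by positivity
  have h4 : Y + 1 ≠ 0 := by positivity
  have h6 : X + Y ≠ 0 := by positivity
  have h7 : X + Y + 1 ≠ 0 := by positivity
  field_simp
  ring

lemma g_int (ν : ℝ) (x y : ℕ) (hx : 1 ≤ x) (hy : 1 ≤ y) :
    ∫ s in (0:ℝ)..1, g ν x s * g ν y s
      = 1 + braux ν x y + (Caux ν y x - Caux ν x y) := by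
  obtain ⟨a, rfl⟩ : ∃ a, x = a + 1 := ⟨x - 1, (Nat.succ_pred_eq_of_pos hx).symm⟩
  obtain ⟨b, rfl⟩ : ∃ b, y = b + 1 := ⟨y - 1, (Nat.succ_pred_eq_of_pos hy).symm⟩
  have hg : ∀ (z : ℕ) (s : ℝ), g ν (z+1) s
      = (s^z - 1) + ((((z:ℝ)+1) / (((z:ℝ)+1) + 1)) ^ ν) * (1 - s^(z+1)) := by
    intro z s; simp [g]
  simp only [hg]
  rw [key_int]
  have hA : ∀ z : ℕ, Aaux ν (z+1)
      = ((((z:ℝ)+1) / (((z:ℝ)+1) + 1)) ^ ν) * (((z:ℝ)+1) / (((z:ℝ)+1) + 1)) := by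
    intro z
    have hpos : (0:ℝ) < ((z:ℝ)+1) / (((z:ℝ)+1) + 1) := by positivity
    simp [Aaux, Real.rpow_add_one hpos.ne']
  simp only [braux, Caux, hA]
  push_cast
  have hXp : (0:ℝ) < (a:ℝ) + 1 := by positivity
  have hYp : (0:ℝ) < (b:ℝ) + 1 := by positivity
  linear_combination final_alg ((a:ℝ)+1) ((b:ℝ)+1)
    ((((a:ℝ)+1) / (((a:ℝ)+1) + 1)) ^ ν) ((((b:ℝ)+1) / (((b:ℝ)+1) + 1)) ^ ν) hXp hYp

theorem test_statistic_formula (ν : ℝ) (hν : 1 < ν) (n : ℕ) (hn : 1 ≤ n)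
    (x : Fin n → ℕ) (hx : ∀ j, 1 ≤ x j) :
    (n : ℝ) * ∫ s in (0:ℝ)..1, ((1 / (n : ℝ)) * ∑ j, g ν (x j) s) ^ 2 =
      (n : ℝ) + (1 / (n : ℝ)) * ∑ i, ∑ j,
        (1 / ((x i : ℝ) + (x j : ℝ) - 1) - (1 / (x i : ℝ) + 1 / (x j : ℝ))
          + 2 * ((x i : ℝ) / ((x i : ℝ) + 1)) ^ (ν + 1) *
              (((x i : ℝ) + 1) / ((x j : ℝ) * ((x j : ℝ) + (x i : ℝ))) - 1)
          + ((x i : ℝ) / ((x i : ℝ) + 1)) ^ (ν + 1) *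
              ((x j : ℝ) / ((x j : ℝ) + 1)) ^ (ν + 1) *
              (((x i : ℝ) + (x j : ℝ) + 2) / ((x i : ℝ) + (x j : ℝ) + 1))) := by
  have hn0 : (n:ℝ) ≠ 0 := Nat.cast_ne_zero.mpr (by omega)
  have hgc : ∀ z : ℕ, Continuous (g ν z) := by
    intro z; unfold g; fun_prop
  have h1 : ∀ s:ℝ, ((1/(n:ℝ)) * ∑ j, g ν (x j) s)^2
      = (1/(n:ℝ))^2 * ∑ i, ∑ j, g ν (x i) s * g ν (x j) s := by
    intro s; rw [mul_pow, sq (∑ j, g ν (x j) s), Finset.sum_mul_sum]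
  simp only [h1]
  rw [intervalIntegral.integral_const_mul]
  have hint : ∀ i j : Fin n,
      IntervalIntegrable (fun s => g ν (x i) s * g ν (x j) s) volume 0 1 :=
    fun i j => ((hgc _).mul (hgc _)).intervalIntegrable _ _
  have h2 : (∫ s in (0:ℝ)..1, ∑ i, ∑ j, g ν (x i) s * g ν (x j) s)
      = ∑ i, ∑ j, ∫ s in (0:ℝ)..1, g ν (x i) s * g ν (x j) s := by
    have hsum : ∀ i : Fin n, IntervalIntegrable
        (fun s : ℝ => ∑ j, g ν (x i) s * g ν (x j) s) volume 0 1 := by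
      intro i
      have h := IntervalIntegrable.sum Finset.univ
        (f := fun (j : Fin n) (s : ℝ) => g ν (x i) s * g ν (x j) s) (fun j _ => hint i j)
      simpa [Finset.sum_fn] using h
    rw [intervalIntegral.integral_finset_sum
        (f := fun (i : Fin n) (s : ℝ) => ∑ j, g ν (x i) s * g ν (x j) s)
        (fun i _ => hsum i)]
    exact Finset.sum_congr rfl fun i _ =>
      intervalIntegral.integral_finset_sum
        (f := fun (j : Fin n) (s : ℝ) => g ν (x i) s * g ν (x j) s)
        (fun j _ => hint i j)
  rw [h2]
  have h3 : ∀ i j : Fin n, (∫ s in (0:ℝ)..1, g ν (x i) s * g ν (x j) s)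
      = 1 + braux ν (x i) (x j) + (Caux ν (x j) (x i) - Caux ν (x i) (x j)) :=
    fun i j => g_int ν (x i) (x j) (hx i) (hx j)
  simp only [h3]
  have hs : ∑ i : Fin n, ∑ j : Fin n, Caux ν (x j) (x i)
      = ∑ i : Fin n, ∑ j : Fin n, Caux ν (x i) (x j) := Finset.sum_comm
  have h4 : ∑ i : Fin n, ∑ j : Fin n,
      (1 + braux ν (x i) (x j) + (Caux ν (x j) (x i) - Caux ν (x i) (x j)))
      = (n:ℝ)^2 + ∑ i, ∑ j, braux ν (x i) (x j) := by
    simp only [Finset.sum_add_distrib, Finset.sum_sub_distrib, Finset.sum_const,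
      Finset.card_univ, Fintype.card_fin, nsmul_eq_mul, hs]
    push_cast; ring
  rw [h4]
  have h5 : ∑ i : Fin n, ∑ j : Fin n, braux ν (x i) (x j)
      = ∑ i : Fin n, ∑ j : Fin n,
        (1 / ((x i : ℝ) + (x j : ℝ) - 1) - (1 / (x i : ℝ) + 1 / (x j : ℝ))
          + 2 * ((x i : ℝ) / ((x i : ℝ) + 1)) ^ (ν + 1) *
              (((x i : ℝ) + 1) / ((x j : ℝ) * ((x j : ℝ) + (x i : ℝ))) - 1)
          + ((x i : ℝ) / ((x i : ℝ) + 1)) ^ (ν + 1) *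
              ((x j : ℝ) / ((x j : ℝ) + 1)) ^ (ν + 1) *
              (((x i : ℝ) + (x j : ℝ) + 2) / ((x i : ℝ) + (x j : ℝ) + 1))) :=
    Finset.sum_congr rfl fun i _ => Finset.sum_congr rfl fun j _ => by
      simp only [braux, Caux, Aaux]; ring
  rw [h5]
  field_simp
end

section
/- Let ν > 1. For every x ∈ ℕ = {1,2,3,...}, one has 0 ≤ h_ν(x,x) = ∫_0^1 g_ν(x,s)^2 ds ≤ 9. Consequently, for any random variable X taking values in ℕ, E[ h_ν(X,X) ] ≤ 9 < ∞. -/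
open MeasureTheory Real Filter Set

lemma g_cont (ν : ℝ) (x : ℕ) : Continuous (fun s => g ν x s) := by
  unfold g; continuity

lemma g_sq_le (ν : ℝ) (hν : 1 < ν) (x : ℕ) {s : ℝ} (hs : s ∈ Set.Icc (0:ℝ) 1) :
    (g ν x s) ^ 2 ≤ 9 := by
  obtain ⟨hs0, hs1⟩ := hs
  have ha0 : (0:ℝ) ≤ s ^ (x - 1) := pow_nonneg hs0 _
  have ha1 : s ^ (x - 1) ≤ 1 := pow_le_one₀ hs0 hs1
  have hb0 : (0:ℝ) ≤ s ^ x := pow_nonneg hs0 _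
  have hb1 : s ^ x ≤ 1 := pow_le_one₀ hs0 hs1
  have hc0 : (0:ℝ) ≤ ((x : ℝ) / ((x : ℝ) + 1)) ^ ν := by
    apply Real.rpow_nonneg
    positivity
  have hc1 : ((x : ℝ) / ((x : ℝ) + 1)) ^ ν ≤ 1 := by
    apply Real.rpow_le_one (by positivity)
    · rw [div_le_one (by positivity)]; linarith
    · linarith
  unfold g
  set a := s ^ (x - 1)
  set b := s ^ x
  set c := ((x : ℝ) / ((x : ℝ) + 1)) ^ ν
  have h1 : (0:ℝ) ≤ c * (1 - b) := mul_nonneg hc0 (by linarith)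
  have h2 : c * (1 - b) ≤ 1 := mul_le_one₀ hc1 (by linarith) (by linarith)
  nlinarith [sq_nonneg (a - 1 + c * (1 - b))]

lemma hker_key (ν : ℝ) (hν : 1 < ν) (x : ℕ) :
    0 ≤ hker ν x x ∧ hker ν x x = (∫ s in (0:ℝ)..1, (g ν x s) ^ 2) ∧ hker ν x x ≤ 9 := by
  have heq : hker ν x x = (∫ s in (0:ℝ)..1, (g ν x s) ^ 2) := by
    unfold hker; congr 1; ext s; ring
  have hint : IntervalIntegrable (fun s => (g ν x s) ^ 2) volume 0 1 :=
    (((g_cont ν x).pow 2)).intervalIntegrable 0 1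
  refine ⟨?_, heq, ?_⟩
  · rw [heq]
    exact intervalIntegral.integral_nonneg (by norm_num) (fun s _ => sq_nonneg _)
  · rw [heq]
    calc (∫ s in (0:ℝ)..1, (g ν x s) ^ 2) ≤ ∫ s in (0:ℝ)..1, (9:ℝ) := by
          apply intervalIntegral.integral_mono_on (by norm_num) hint
            (intervalIntegrable_const)
          exact fun s hs => g_sq_le ν hν x hs
      _ = 9 := by simp

theorem hker_diag_bound
    {Ω : Type*} [MeasurableSpace Ω] (P : Measure Ω) [IsProbabilityMeasure P]
    (X : Ω → ℕ) (hXm : Measurable X) (hX1 : ∀ ω, 1 ≤ X ω)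
    (ν : ℝ) (hν : 1 < ν) :
    (∀ x : ℕ, 1 ≤ x →
        0 ≤ hker ν x x ∧ hker ν x x = (∫ s in (0:ℝ)..1, (g ν x s) ^ 2) ∧ hker ν x x ≤ 9) ∧
    Integrable (fun ω => hker ν (X ω) (X ω)) P ∧
    (∫ ω, hker ν (X ω) (X ω) ∂P) ≤ 9 := by
  have key := fun x => hker_key ν hν x
  have hmeas : Measurable (fun ω => hker ν (X ω) (X ω)) :=
    (measurable_from_top (f := fun n : ℕ => hker ν n n)).comp hXm
  have hInt : Integrable (fun ω => hker ν (X ω) (X ω)) P := by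
    apply (integrable_const (9:ℝ)).mono' hmeas.aestronglyMeasurable
    filter_upwards with ω
    rw [Real.norm_eq_abs, abs_of_nonneg (key _).1]
    exact (key _).2.2
  refine ⟨fun x _ => key x, hInt, ?_⟩
  calc (∫ ω, hker ν (X ω) (X ω) ∂P) ≤ ∫ _, (9:ℝ) ∂P :=
        integral_mono hInt (integrable_const _) (fun ω => (key _).2.2)
    _ = 9 := by simp
end

section
/- Let ν₀ > 1, let X be distributed according to DPareto(ν₀), and let ℓ : ℕ → ℝ satisfy E[ ℓ(X) ] = 0 and E[ ℓ(X)^2 ] < ∞. Define a(s) = E[ ∂_ν g_{ν₀}(X,s) ], ψ(x,s) = g_{ν₀}(x,s) + a(s) ℓ(x), and k(x,y) = ∫_0^1 ψ(x,s) ψ(y,s) ds. Then E[ ψ(X,s) ] = 0 for every s ∈ (0,1), and consequently E[ k(x, X) ] = 0 for every x ∈ ℕ; that is, k is degenerate of order 1 under DPareto(ν₀). -/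
/-!
The DPareto weights `p = dpPMF ν` satisfy `p k * (k / (k + 1)) ^ ν = p (k + 1)`, so
`p k * g ν k s = u k - u (k + 1)` with `u k = p k * (s ^ (k - 1) - 1)`. Since `u 0 = 0` and
`u k → 0`, the series `∑ p k * g ν k s` telescopes to `0`; together with `E ℓ(X) = 0` this gives
`E ψ(X, s) = 0` for every `s ∈ [0, 1]`. Then `E k(x, X) = ∫₀¹ ψ(x, s) E ψ(X, s) ds = 0`, where
expectation and `ds`-integral may be exchanged because `|a| ≤ 1` gives `|ψ(j, s)| ≤ 2 + |ℓ j|`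
and `a` is monotone in `s`, hence measurable.
-/

open MeasureTheory Real Filter Set

open Topology

theorem hasSum_sub_succ_of_tendsto {G : Type*} [AddCommGroup G] [TopologicalSpace G]
    [IsTopologicalAddGroup G] [T2Space G] {u : ℕ → G} {l : G}
    (hs : Summable fun n ↦ u n - u (n + 1)) (hu : Tendsto u atTop (𝓝 l)) :
    HasSum (fun n ↦ u n - u (n + 1)) (u 0 - l) := by
  rw [hs.hasSum_iff_tendsto_nat]
  simp_rw [Finset.sum_range_sub']
  exact tendsto_const_nhds.sub hu

theorem hasSum_integral_countable {α E : Type*} [MeasurableSpace α] [Countable α]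
    [MeasurableSingletonClass α] [NormedAddCommGroup E] [NormedSpace ℝ E] [CompleteSpace E]
    {μ : Measure α} {f : α → E} (hf : Integrable f μ) :
    HasSum (fun a ↦ μ.real {a} • f a) (∫ a, f a ∂μ) := by
  rw [← Measure.sum_smul_dirac μ] at hf ⊢
  convert hasSum_integral_measure hf using 2 with a
  rw [integral_smul_measure, integral_dirac, Measure.sum_smul_dirac, measureReal_def]

theorem integral_integral_mul_eq_zero {α β : Type*} [MeasurableSpace α] [Countable α]
    [MeasurableSingletonClass α] [MeasurableSpace β] {μ : Measure α} {ν : Measure β}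
    [IsFiniteMeasure ν] {φ : α → β → ℝ} {B : α → ℝ}
    (hφ : ∀ a, AEStronglyMeasurable (φ a) ν) (hφB : ∀ a, ∀ᵐ b ∂ν, ‖φ a b‖ ≤ B a)
    (hB : Integrable B μ) (hmean : ∀ᵐ b ∂ν, ∫ a, φ a b ∂μ = 0) (x : α) :
    ∫ a, (∫ b, φ x b * φ a b ∂ν) ∂μ = 0 := by
  have hprod_le : ∀ a, ∀ᵐ b ∂ν, ‖φ x b * φ a b‖ ≤ B x * B a := fun a ↦ by
    filter_upwards [hφB x, hφB a] with b hx ha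
    rw [norm_mul]
    exact mul_le_mul hx ha (norm_nonneg _) ((norm_nonneg _).trans hx)
  have hprod_int : ∀ a, Integrable (fun b ↦ φ x b * φ a b) ν := fun a ↦
    .mono' (integrable_const _) ((hφ x).mul (hφ a)) (hprod_le a)
  have hB_sum : Summable fun a ↦ μ.real {a} * B a := (hasSum_integral_countable hB).summable
  have hK_int : Integrable (fun a ↦ ∫ b, φ x b * φ a b ∂ν) μ := by
    refine .mono' (hB.const_mul (B x * ν.real univ))
      (measurable_of_countable _).aestronglyMeasurable (ae_of_all _ fun a ↦ ?_)
    calc ‖∫ b, φ x b * φ a b ∂ν‖ ≤ B x * B a * ν.real univ :=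
          norm_integral_le_of_norm_le_const (hprod_le a)
      _ = B x * ν.real univ * B a := by ring
  have hslice_int : ∀ᵐ b ∂ν, Integrable (fun a ↦ φ a b) μ := by
    filter_upwards [ae_all_iff.2 hφB] with b hb
    exact .mono' hB (measurable_of_countable _).aestronglyMeasurable (ae_of_all _ hb)
  calc ∫ a, (∫ b, φ x b * φ a b ∂ν) ∂μ
      = ∑' a, ∫ b, μ.real {a} * (φ x b * φ a b) ∂ν := by
        rw [(hasSum_integral_countable hK_int).tsum_eq.symm]
        simp_rw [smul_eq_mul, integral_const_mul]
    _ = ∫ b, ∑' a, μ.real {a} * (φ x b * φ a b) ∂ν := by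
        refine integral_tsum_of_summable_integral_norm (fun a ↦ (hprod_int a).const_mul _) ?_
        refine .of_nonneg_of_le (fun a ↦ integral_nonneg fun _ ↦ norm_nonneg _) (fun a ↦ ?_)
          ((hB_sum.mul_left (B x * ν.real univ)))
        calc ∫ b, ‖μ.real {a} * (φ x b * φ a b)‖ ∂ν ≤ ∫ _, μ.real {a} * (B x * B a) ∂ν := by
              refine integral_mono_ae ((hprod_int a).const_mul _).norm (integrable_const _) ?_
              filter_upwards [hprod_le a] with b hb
              rw [norm_mul, Real.norm_of_nonneg measureReal_nonneg]
              exact mul_le_mul_of_nonneg_left hb measureReal_nonneg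
          _ = B x * ν.real univ * (μ.real {a} * B a) := by
              rw [integral_const, smul_eq_mul]; ring
    _ = ∫ b, φ x b * ∫ a, φ a b ∂μ ∂ν := by
        refine integral_congr_ae ?_
        filter_upwards [hslice_int] with b hb
        rw [(hasSum_integral_countable hb).tsum_eq.symm, ← tsum_mul_left]
        congr 1 with a
        rw [smul_eq_mul]; ring
    _ = 0 := by
        refine integral_eq_zero_of_ae ?_
        filter_upwards [hmean] with b hb
        simp [hb]

section DPareto

variable {ν : ℝ}

theorem summable_natCast_rpow_neg (hν : 1 < ν) : Summable fun k : ℕ ↦ (k : ℝ) ^ (-ν) :=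
  Real.summable_nat_rpow.2 (by linarith)

theorem zetaR_pos (hν : 1 < ν) : 0 < zetaR ν := by
  have hs : Summable fun k : ℕ ↦ ((k : ℝ) + 1) ^ (-ν) := by
    simpa using (summable_nat_add_iff 1).2 (summable_natCast_rpow_neg hν)
  have h1 := hs.le_tsum 0 fun k _ ↦ Real.rpow_nonneg (by positivity) _
  simp only [CharP.cast_eq_zero, zero_add, one_rpow] at h1
  exact one_pos.trans_le h1

theorem dpPMF_nonneg (hν : 1 < ν) (k : ℕ) : 0 ≤ dpPMF ν k :=
  div_nonneg (Real.rpow_nonneg k.cast_nonneg _) (zetaR_pos hν).le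

theorem summable_dpPMF (hν : 1 < ν) : Summable (dpPMF ν) :=
  (summable_natCast_rpow_neg hν).div_const _

theorem dpPMF_zero (hν : ν ≠ 0) : dpPMF ν 0 = 0 := by
  simp [dpPMF, Real.zero_rpow (neg_ne_zero.2 hν)]

theorem dpPMF_mul_rpow_div_succ {k : ℕ} (hk : k ≠ 0) :
    dpPMF ν k * ((k : ℝ) / (k + 1)) ^ ν = dpPMF ν (k + 1) := by
  have hk0 : (0 : ℝ) < k := by positivity
  simp only [dpPMF, Nat.cast_add_one]
  rw [Real.div_rpow hk0.le (by positivity), Real.rpow_neg hk0.le, Real.rpow_neg (by positivity)]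
  have : (k : ℝ) ^ ν ≠ 0 := (Real.rpow_pos_of_pos hk0 _).ne'
  field_simp

theorem rpow_natCast_div_succ_le_one (hν : 0 ≤ ν) (k : ℕ) : ((k : ℝ) / (k + 1)) ^ ν ≤ 1 :=
  Real.rpow_le_one (by positivity) ((div_le_one (by positivity)).2 (by linarith)) hν

theorem abs_g_le_two (hν : 0 ≤ ν) {s : ℝ} (hs : s ∈ Icc (0 : ℝ) 1) (k : ℕ) : |g ν k s| ≤ 2 := by
  obtain ⟨hs0, hs1⟩ := hs
  have h1 : 0 ≤ s ^ (k - 1) := pow_nonneg hs0 _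
  have h2 : s ^ (k - 1) ≤ 1 := pow_le_one₀ hs0 hs1
  have h3 : 0 ≤ s ^ k := pow_nonneg hs0 _
  have h4 : s ^ k ≤ 1 := pow_le_one₀ hs0 hs1
  have hc0 : 0 ≤ ((k : ℝ) / (k + 1)) ^ ν := Real.rpow_nonneg (by positivity) _
  have hc1 := rpow_natCast_div_succ_le_one hν k
  rw [abs_le, g]
  constructor <;> nlinarith

theorem integrable_g_comp {Ω : Type*} [MeasurableSpace Ω] {P : Measure Ω} [IsFiniteMeasure P]
    {X : Ω → ℕ} (hν : 0 ≤ ν) (hXm : Measurable X) {s : ℝ} (hs : s ∈ Icc (0 : ℝ) 1) :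
    Integrable (fun ω ↦ g ν (X ω) s) P :=
  .of_bound ((measurable_of_countable fun k ↦ g ν k s).comp hXm).aestronglyMeasurable 2
    (ae_of_all _ fun _ ↦ abs_g_le_two hν hs _)

theorem continuous_g (ν : ℝ) (k : ℕ) : Continuous (g ν k) := by
  unfold g
  fun_prop

theorem dpPMF_mul_g (hν : ν ≠ 0) (k : ℕ) (s : ℝ) :
    dpPMF ν k * g ν k s = dpPMF ν k * (s ^ (k - 1) - 1) - dpPMF ν (k + 1) * (s ^ k - 1) := by
  rcases Nat.eq_zero_or_pos k with rfl | hk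
  · simp [dpPMF_zero hν]
  · rw [g, ← dpPMF_mul_rpow_div_succ hk.ne']
    ring

theorem hasSum_dpPMF_mul_g (hν : 1 < ν) {s : ℝ} (hs : s ∈ Icc (0 : ℝ) 1) :
    HasSum (fun k ↦ dpPMF ν k * g ν k s) 0 := by
  set u : ℕ → ℝ := fun k ↦ dpPMF ν k * (s ^ (k - 1) - 1)
  have hu : (fun k ↦ dpPMF ν k * g ν k s) = fun k ↦ u k - u (k + 1) := by
    funext k
    simpa [u] using dpPMF_mul_g (by linarith) k s
  have hsum : Summable fun k ↦ dpPMF ν k * g ν k s := by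
    refine .of_norm_bounded ((summable_dpPMF hν).mul_right 2) fun k ↦ ?_
    rw [norm_mul, Real.norm_of_nonneg (dpPMF_nonneg hν k), Real.norm_eq_abs]
    exact mul_le_mul_of_nonneg_left (abs_g_le_two (by linarith) hs k) (dpPMF_nonneg hν k)
  have hlim : Tendsto u atTop (𝓝 0) := by
    refine squeeze_zero_norm (fun k ↦ ?_) (summable_dpPMF hν).tendsto_atTop_zero
    have h0 : 0 ≤ s ^ (k - 1) := pow_nonneg hs.1 _
    have h1 : s ^ (k - 1) ≤ 1 := pow_le_one₀ hs.1 hs.2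
    rw [norm_mul, Real.norm_of_nonneg (dpPMF_nonneg hν k)]
    refine mul_le_of_le_one_right (dpPMF_nonneg hν k) ?_
    rw [Real.norm_eq_abs, abs_le]
    constructor <;> linarith
  rw [hu] at hsum ⊢
  simpa [u, dpPMF_zero (by linarith : ν ≠ 0)] using hasSum_sub_succ_of_tendsto hsum hlim

end DPareto

namespace IsDPareto

variable {Ω : Type*} [MeasurableSpace Ω] {P : Measure Ω} {X : Ω → ℕ} {ν : ℝ}

theorem measureReal_map_singleton (h : IsDPareto P X ν) (hν : 1 < ν) (hXm : Measurable X)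
    (hX1 : ∀ ω, 1 ≤ X ω) (k : ℕ) : (P.map X).real {k} = dpPMF ν k := by
  rw [measureReal_def, Measure.map_apply hXm (measurableSet_singleton k)]
  rcases Nat.eq_zero_or_pos k with rfl | hk
  · have : X ⁻¹' {0} = ∅ := eq_empty_of_forall_notMem fun ω h0 ↦ by
      have := hX1 ω; simp_all
    simp [this, dpPMF_zero (by linarith : ν ≠ 0)]
  · rw [h k hk, ENNReal.toReal_ofReal (dpPMF_nonneg hν k)]

theorem hasSum_integral_comp (h : IsDPareto P X ν) (hν : 1 < ν) (hXm : Measurable X)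
    (hX1 : ∀ ω, 1 ≤ X ω) {f : ℕ → ℝ} (hf : Integrable (fun ω ↦ f (X ω)) P) :
    HasSum (fun k ↦ dpPMF ν k * f k) (∫ ω, f (X ω) ∂P) := by
  have hfm : AEStronglyMeasurable f (P.map X) := (measurable_of_countable f).aestronglyMeasurable
  rw [← integral_map hXm.aemeasurable hfm]
  simpa only [h.measureReal_map_singleton hν hXm hX1, smul_eq_mul] using
    hasSum_integral_countable ((integrable_map_measure hfm hXm.aemeasurable).2 hf)

theorem integral_g_eq_zero [IsFiniteMeasure P] (h : IsDPareto P X ν) (hν : 1 < ν)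
    (hXm : Measurable X) (hX1 : ∀ ω, 1 ≤ X ω) {s : ℝ} (hs : s ∈ Icc (0 : ℝ) 1) :
    ∫ ω, g ν (X ω) s ∂P = 0 :=
  (h.hasSum_integral_comp hν hXm hX1 (integrable_g_comp (by linarith) hXm hs)).unique
    (hasSum_dpPMF_mul_g hν hs)

end IsDPareto

/-- The partial derivative `∂_ν g ν x s`. -/
noncomputable def gDeriv (ν : ℝ) (x : ℕ) (s : ℝ) : ℝ :=
  ((x : ℝ) / ((x : ℝ) + 1)) ^ ν * Real.log ((x : ℝ) / ((x : ℝ) + 1)) * (1 - s ^ x)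

section gDeriv

variable {ν : ℝ}

theorem abs_log_natCast_div_succ_le_one (k : ℕ) : |log ((k : ℝ) / (k + 1))| ≤ 1 := by
  rcases Nat.eq_zero_or_pos k with rfl | hk
  · simp
  have hk1 : (1 : ℝ) ≤ k := by exact_mod_cast hk
  have hpos : (0 : ℝ) < k / (k + 1) := by positivity
  have hlog_nonpos : log ((k : ℝ) / (k + 1)) ≤ 0 :=
    Real.log_nonpos hpos.le ((div_le_one (by positivity)).2 (by linarith))
  have hlog_ge : 1 - ((k : ℝ) / (k + 1))⁻¹ ≤ log ((k : ℝ) / (k + 1)) :=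
    Real.one_sub_inv_le_log_of_pos hpos
  have hinv : 1 - ((k : ℝ) / (k + 1))⁻¹ = -1 / k := by
    field_simp; ring
  have : -1 ≤ -1 / (k : ℝ) := by
    rw [le_div_iff₀ (by positivity)]; linarith
  rw [abs_le]
  constructor <;> linarith

theorem abs_gDeriv_le_one (hν : 0 ≤ ν) {s : ℝ} (hs : s ∈ Icc (0 : ℝ) 1) (k : ℕ) :
    |gDeriv ν k s| ≤ 1 := by
  have h1 : |1 - s ^ k| ≤ 1 := by
    have := pow_nonneg hs.1 k
    have := pow_le_one₀ hs.1 hs.2 (n := k)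
    rw [abs_le]; constructor <;> linarith
  have h2 : |((k : ℝ) / (k + 1)) ^ ν| ≤ 1 := by
    rw [abs_of_nonneg (Real.rpow_nonneg (by positivity) _)]
    exact rpow_natCast_div_succ_le_one hν k
  rw [gDeriv, abs_mul, abs_mul]
  calc |((k : ℝ) / (k + 1)) ^ ν| * |log ((k : ℝ) / (k + 1))| * |1 - s ^ k| ≤ 1 * 1 * 1 := by
        gcongr
        exact abs_log_natCast_div_succ_le_one k
    _ = 1 := by norm_num

theorem gDeriv_monotoneOn (ν : ℝ) (k : ℕ) : MonotoneOn (gDeriv ν k) (Ici 0) := by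
  intro s hs t _ hst
  have hc : ((k : ℝ) / (k + 1)) ^ ν * log ((k : ℝ) / (k + 1)) ≤ 0 :=
    mul_nonpos_of_nonneg_of_nonpos (Real.rpow_nonneg (by positivity) _)
      (Real.log_nonpos (by positivity) ((div_le_one (by positivity)).2 (by linarith)))
  exact mul_le_mul_of_nonpos_left (by gcongr) hc

variable {Ω : Type*} [MeasurableSpace Ω] {P : Measure Ω} {X : Ω → ℕ}

theorem abs_integral_gDeriv_le_one [IsProbabilityMeasure P] (hν : 0 ≤ ν) {s : ℝ}
    (hs : s ∈ Icc (0 : ℝ) 1) : |∫ ω, gDeriv ν (X ω) s ∂P| ≤ 1 := by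
  simpa using norm_integral_le_of_norm_le_const (μ := P) (f := fun ω ↦ gDeriv ν (X ω) s)
    (ae_of_all _ fun ω ↦ abs_gDeriv_le_one hν hs (X ω))

theorem monotoneOn_integral_gDeriv [IsFiniteMeasure P] (hν : 0 ≤ ν) (hXm : Measurable X) :
    MonotoneOn (fun s ↦ ∫ ω, gDeriv ν (X ω) s ∂P) (Icc 0 1) := by
  have hint : ∀ s ∈ Icc (0 : ℝ) 1, Integrable (fun ω ↦ gDeriv ν (X ω) s) P := fun s hs ↦
    .of_bound ((measurable_of_countable fun k ↦ gDeriv ν k s).comp hXm).aestronglyMeasurable 1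
      (ae_of_all _ fun _ ↦ abs_gDeriv_le_one hν hs _)
  intro s hs t ht hst
  exact integral_mono (hint s hs) (hint t ht) fun ω ↦ gDeriv_monotoneOn ν _ hs.1 ht.1 hst

end gDeriv

theorem k_kernel_degenerate_general
    {Ω : Type*} [MeasurableSpace Ω] (P : Measure Ω) [IsProbabilityMeasure P]
    (X : Ω → ℕ) (hXm : Measurable X) (hX1 : ∀ ω, 1 ≤ X ω)
    (ν₀ : ℝ) (hν₀ : 1 < ν₀) (hdist : IsDPareto P X ν₀)
    (ℓ : ℕ → ℝ) (hℓ1 : Integrable (fun ω => ℓ (X ω)) P)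
    (hℓ0 : (∫ ω, ℓ (X ω) ∂P) = 0)
    (a : ℝ → ℝ)
    (ha : ∀ s : ℝ, a s = ∫ ω, ((X ω : ℝ) / ((X ω : ℝ) + 1)) ^ ν₀ *
        Real.log ((X ω : ℝ) / ((X ω : ℝ) + 1)) * (1 - s ^ (X ω)) ∂P)
    (ψ : ℕ → ℝ → ℝ) (hψ : ∀ x s, ψ x s = g ν₀ x s + a s * ℓ x)
    (k : ℕ → ℕ → ℝ) (hk : ∀ x y, k x y = ∫ s in (0:ℝ)..1, ψ x s * ψ y s) :
    (∀ s ∈ Set.Ioo (0:ℝ) 1, (∫ ω, ψ (X ω) s ∂P) = 0) ∧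
    ∀ x : ℕ, 1 ≤ x → (∫ ω, k x (X ω) ∂P) = 0 := by
  have hν₀' : 0 ≤ ν₀ := by linarith
  have ha' : a = fun s ↦ ∫ ω, gDeriv ν₀ (X ω) s ∂P := funext ha
  have hψ_le : ∀ j, ∀ s ∈ Icc (0 : ℝ) 1, ‖ψ j s‖ ≤ 2 + |ℓ j| := fun j s hs ↦ by
    have ha_le : |a s| ≤ 1 := ha' ▸ abs_integral_gDeriv_le_one hν₀' hs
    rw [hψ, Real.norm_eq_abs]
    refine (abs_add_le _ _).trans (add_le_add (abs_g_le_two hν₀' hs j) ?_)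
    rw [abs_mul]
    exact mul_le_of_le_one_left (abs_nonneg _) ha_le
  have hmean : ∀ s ∈ Icc (0 : ℝ) 1, ∫ ω, ψ (X ω) s ∂P = 0 := fun s hs ↦ by
    simp_rw [hψ]
    rw [integral_add (integrable_g_comp hν₀' hXm hs) (hℓ1.const_mul _), integral_const_mul,
      hdist.integral_g_eq_zero hν₀ hXm hX1 hs, hℓ0, mul_zero, add_zero]
  refine ⟨fun s hs ↦ hmean s (Ioo_subset_Icc_self hs), fun x _ ↦ ?_⟩
  have ha_meas : AEMeasurable a (volume.restrict (Ioc 0 1)) := by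
    rw [ha']
    exact aemeasurable_restrict_of_monotoneOn measurableSet_Ioc
      ((monotoneOn_integral_gDeriv hν₀' hXm).mono Ioc_subset_Icc_self)
  rw [← integral_map hXm.aemeasurable (measurable_of_countable _).aestronglyMeasurable]
  simp_rw [hk, intervalIntegral.integral_of_le zero_le_one]
  refine integral_integral_mul_eq_zero (B := fun j ↦ 2 + |ℓ j|) (fun j ↦ ?_) (fun j ↦ ?_) ?_ ?_ x
  · rw [show ψ j = fun s ↦ g ν₀ j s + a s * ℓ j from funext (hψ j)]
    exact (continuous_g ν₀ j).aestronglyMeasurable.add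
      (ha_meas.mul_const _).aestronglyMeasurable
  · exact ae_restrict_of_forall_mem measurableSet_Ioc fun s hs ↦
      hψ_le j s (Ioc_subset_Icc_self hs)
  · exact (integrable_map_measure (measurable_of_countable _).aestronglyMeasurable
      hXm.aemeasurable).2 ((integrable_const 2).add hℓ1.abs)
  · refine ae_restrict_of_forall_mem measurableSet_Ioc fun s hs ↦ ?_
    rw [integral_map hXm.aemeasurable (measurable_of_countable _).aestronglyMeasurable]
    exact hmean s (Ioc_subset_Icc_self hs)

theorem k_kernel_degenerate
    {Ω : Type*} [MeasurableSpace Ω] (P : Measure Ω) [IsProbabilityMeasure P]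
    (X : Ω → ℕ) (hXm : Measurable X) (hX1 : ∀ ω, 1 ≤ X ω)
    (ν₀ : ℝ) (hν₀ : 1 < ν₀) (hdist : IsDPareto P X ν₀)
    (ℓ : ℕ → ℝ) (hℓ1 : Integrable (fun ω => ℓ (X ω)) P)
    (hℓ0 : (∫ ω, ℓ (X ω) ∂P) = 0)
    (hℓ2 : Integrable (fun ω => (ℓ (X ω)) ^ 2) P)
    (a : ℝ → ℝ)
    (ha : ∀ s : ℝ, a s = ∫ ω, ((X ω : ℝ) / ((X ω : ℝ) + 1)) ^ ν₀ *
        Real.log ((X ω : ℝ) / ((X ω : ℝ) + 1)) * (1 - s ^ (X ω)) ∂P)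
    (ψ : ℕ → ℝ → ℝ) (hψ : ∀ x s, ψ x s = g ν₀ x s + a s * ℓ x)
    (k : ℕ → ℕ → ℝ) (hk : ∀ x y, k x y = ∫ s in (0:ℝ)..1, ψ x s * ψ y s) :
    (∀ s ∈ Set.Ioo (0:ℝ) 1, (∫ ω, ψ (X ω) s ∂P) = 0) ∧
    ∀ x : ℕ, 1 ≤ x → (∫ ω, k x (X ω) ∂P) = 0 :=
  k_kernel_degenerate_general P X hXm hX1 ν₀ hν₀ hdist ℓ hℓ1 hℓ0 a ha ψ hψ k hk
end
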